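/- arXiv:1909.12767 — 8 statements merged into one kernel-verified Lean document; each statement's English description precedes it below -/
import Mathlib

section
/- For every finite rooted tree T, the layered independent set ⋃_{ℓ≥0} leaf(T^[ℓ]) is a maximum independent set of T, i.e., it is an independent set whose cardinality equals the independence number of T. -/
open MeasureTheory ProbabilityTheory Filter Asymptotics

/-- The independence number of a graph: the maximum size of a set of vertices
no two of which are adjacent. -/
noncomputable def indepNum {V : Type*} (G : SimpleGraph V) : ℕ :=
  sSup {k : ℕ | ∃ s : Finset V, s.card = k ∧ ∀ u ∈ s, ∀ v ∈ s, ¬ G.Adj u v}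

/-- The graph associated to a parent function `p` on the vertex set `V`:
`u` and `v` are adjacent iff one is the parent of the other (fixed points give no loops). -/
def parentGraph {V : Type*} (p : V → V) : SimpleGraph V :=
  SimpleGraph.fromRel fun u v => p u = v

/-- The set of descendants of `v` (including `v` itself) for the parent function `p`. -/
def descSet {V : Type*} (p : V → V) (v : V) : Set V := {u | ∃ k : ℕ, p^[k] u = v}

/-- `p` is the parent function of a rooted tree with root `r`. -/
def IsRootedTree {V : Type*} (p : V → V) (r : V) : Prop :=
  p r = r ∧ ∀ v : V, ∃ k : ℕ, p^[k] v = r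

/-- `p` is the parent function of a rooted forest: iterating the parent map from any
vertex eventually reaches a root (a fixed point of `p`). -/
def IsRootedForest {V : Type*} (p : V → V) : Prop :=
  ∀ v : V, ∃ k : ℕ, p (p^[k] v) = p^[k] v

/-- The leaves of the forest induced on the vertex subset `S`: members of `S` with no
children inside `S`. -/
def leafIn {V : Type*} (p : V → V) (S : Set V) : Set V :=
  {v | v ∈ S ∧ ∀ u ∈ S, u ≠ v → p u ≠ v}

/-- One step of the layer process: remove from `S` all leaves together with their parents. -/
def layerStep {V : Type*} (p : V → V) (S : Set V) : Set V :=
  S \ (leafIn p S ∪ {v | v ∈ S ∧ ∃ u ∈ leafIn p S, u ≠ v ∧ p u = v})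

/-- `layerFrom p S₀ ℓ` is `T^[ℓ]` for the forest induced on the vertex set `S₀`. -/
def layerFrom {V : Type*} (p : V → V) (S₀ : Set V) : ℕ → Set V
  | 0 => S₀
  | ℓ + 1 => layerStep p (layerFrom p S₀ ℓ)

/-- The layered independent set of the forest induced on the vertex set `S₀`:
the union over all `ℓ` of the leaves of `T^[ℓ]`. -/
def layeredIndepSetOn {V : Type*} (p : V → V) (S₀ : Set V) : Set V :=
  ⋃ ℓ : ℕ, leafIn p (layerFrom p S₀ ℓ)

/-- The layered independent set of the tree/forest with parent function `p`. -/
def layeredIndepSet {V : Type*} (p : V → V) : Set V :=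
  layeredIndepSetOn p Set.univ


section AuxLIS

variable {V : Type*} [Fintype V] (p : V → V)

lemma parentGraph_adj (u v : V) :
    (parentGraph p).Adj u v ↔ u ≠ v ∧ (p u = v ∨ p v = u) := by
  simp [parentGraph, SimpleGraph.fromRel_adj]

lemma leafIn_subset (S : Set V) : leafIn p S ⊆ S := fun v hv => hv.1

lemma layerStep_subset (S : Set V) : layerStep p S ⊆ S := Set.diff_subset

lemma layerFrom_subset (S : Set V) : ∀ ℓ, layerFrom p S ℓ ⊆ S
  | 0 => le_refl S
  | (ℓ + 1) => (layerStep_subset p _).trans (layerFrom_subset S ℓ)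

lemma layerFrom_succ_subset (S : Set V) (ℓ : ℕ) :
    layerFrom p S (ℓ + 1) ⊆ layerFrom p S ℓ := layerStep_subset p _

lemma layerFrom_antitone (S : Set V) {ℓ m : ℕ} (hlm : ℓ ≤ m) :
    layerFrom p S m ⊆ layerFrom p S ℓ := by
  induction m with
  | zero => simp_all
  | succ m ih =>
    rcases Nat.lt_or_ge ℓ (m + 1) with hl | hl
    · exact (layerFrom_succ_subset p S m).trans (ih (Nat.lt_succ_iff.mp hl))
    · have : ℓ = m + 1 := le_antisymm hlm hl
      subst this; exact le_refl _

lemma layerFrom_shift (S : Set V) : ∀ ℓ,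
    layerFrom p S (ℓ + 1) = layerFrom p (layerStep p S) ℓ
  | 0 => rfl
  | (ℓ + 1) => by
    show layerStep p (layerFrom p S (ℓ + 1)) = layerStep p (layerFrom p (layerStep p S) ℓ)
    rw [layerFrom_shift S ℓ]

lemma layeredIndepSetOn_eq (S : Set V) :
    layeredIndepSetOn p S = leafIn p S ∪ layeredIndepSetOn p (layerStep p S) := by
  ext x
  simp only [layeredIndepSetOn, Set.mem_iUnion, Set.mem_union]
  constructor
  · rintro ⟨ℓ, hx⟩
    cases ℓ with
    | zero => exact Or.inl hx
    | succ ℓ => exact Or.inr ⟨ℓ, by rwa [layerFrom_shift p S ℓ] at hx⟩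
  · rintro (hx | ⟨ℓ, hx⟩)
    · exact ⟨0, hx⟩
    · exact ⟨ℓ + 1, by rwa [layerFrom_shift p S ℓ]⟩

lemma layeredIndepSetOn_subset (S : Set V) : layeredIndepSetOn p S ⊆ S := by
  refine Set.iUnion_subset fun ℓ => ?_
  exact (leafIn_subset p _).trans (layerFrom_subset p S ℓ)

/-- Key independence step: a leaf at layer `ℓ` cannot have its parent be a leaf at a
later (or equal) layer. -/
lemma not_parent_of_later_leaf (S : Set V) {ℓ m : ℕ} (hlm : ℓ ≤ m) {u v : V}
    (hu : u ∈ leafIn p (layerFrom p S ℓ)) (hv : v ∈ leafIn p (layerFrom p S m))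
    (hne : u ≠ v) (hp : p u = v) : False := by
  rcases eq_or_lt_of_le hlm with rfl | hlt
  · exact hv.2 u hu.1 hne hp
  · -- v survives to layer ℓ+1, but v is the parent of the leaf u at layer ℓ
    have hv1 : v ∈ layerFrom p S (ℓ + 1) := layerFrom_antitone p S hlt hv.1
    have : v ∉ layerFrom p S (ℓ + 1) := by
      intro hmem
      have hvℓ : v ∈ layerFrom p S ℓ := (layerFrom_succ_subset p S ℓ) hmem
      exact hmem.2 (Or.inr ⟨hvℓ, u, hu, hne, hp⟩)
    exact this hv1

lemma layeredIndepSetOn_indep (S : Set V) :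
    ∀ u ∈ layeredIndepSetOn p S, ∀ v ∈ layeredIndepSetOn p S, ¬ (parentGraph p).Adj u v := by
  intro u hu v hv hadj
  rw [parentGraph_adj] at hadj
  obtain ⟨hne, hpd⟩ := hadj
  simp only [layeredIndepSetOn, Set.mem_iUnion] at hu hv
  obtain ⟨ℓ, hu⟩ := hu
  obtain ⟨m, hv⟩ := hv
  rcases le_total ℓ m with hlm | hml
  · rcases hpd with hp | hp
    · exact not_parent_of_later_leaf p S hlm hu hv hne hp
    · exact hu.2 v (layerFrom_antitone p S hlm hv.1) (Ne.symm hne) hp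
  · rcases hpd with hp | hp
    · exact hv.2 u (layerFrom_antitone p S hml hu.1) hne hp
    · exact not_parent_of_later_leaf p S hml hv hu (Ne.symm hne) hp

lemma exists_leafIn {r : V} (h : IsRootedTree p r) {S : Set V} (hS : S.Nonempty) :
    (leafIn p S).Nonempty := by
  classical
  obtain ⟨v, hvS, hmax⟩ := S.exists_max_image (fun v => Nat.find (h.2 v)) S.toFinite hS
  refine ⟨v, hvS, ?_⟩
  intro u huS hne hpu
  have hdu : Nat.find (h.2 v) + 1 ≤ Nat.find (h.2 u) := by
    rw [Nat.le_find_iff]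
    intro m hm hmr
    cases m with
    | zero =>
      simp only [Function.iterate_zero, id_eq] at hmr
      subst hmr
      exact hne (by rw [← hpu, h.1])
    | succ i =>
      have hiv : p^[i] v = r := by
        rwa [Function.iterate_succ_apply, hpu] at hmr
      exact Nat.find_min (h.2 v) (by omega) hiv
  have := hmax u huS
  omega

/-- Two leaves of the same layer are never adjacent. -/
lemma leafIn_pairwise_nonadj {S : Set V} {u v : V} (hu : u ∈ leafIn p S)
    (hv : v ∈ leafIn p S) : ¬ (parentGraph p).Adj u v := by
  rw [parentGraph_adj]
  rintro ⟨hne, hp | hp⟩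
  · exact hv.2 u hu.1 hne hp
  · exact hu.2 v hv.1 (Ne.symm hne) hp

/-- A member of `layerStep p S` is never adjacent to a leaf of `S`. -/
lemma layerStep_nonadj_leaf {S : Set V} {u v : V} (hu : u ∈ layerStep p S)
    (hv : v ∈ leafIn p S) : ¬ (parentGraph p).Adj u v := by
  rw [parentGraph_adj]
  rintro ⟨hne, hp | hp⟩
  · exact hv.2 u hu.1 hne hp
  · exact hu.2 (Or.inr ⟨hu.1, v, hv, Ne.symm hne, hp⟩)

/-- The maximum size of an independent set contained in `S`. -/
noncomputable def maxIndep (S : Set V) : ℕ :=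
  sSup {k : ℕ | ∃ A : Finset V, ↑A ⊆ S ∧ A.card = k ∧
    ∀ u ∈ A, ∀ v ∈ A, ¬ (parentGraph p).Adj u v}

lemma maxIndep_set_nonempty (S : Set V) :
    {k : ℕ | ∃ A : Finset V, ↑A ⊆ S ∧ A.card = k ∧
      ∀ u ∈ A, ∀ v ∈ A, ¬ (parentGraph p).Adj u v}.Nonempty :=
  ⟨0, ∅, by simp⟩

lemma maxIndep_set_bddAbove (S : Set V) :
    BddAbove {k : ℕ | ∃ A : Finset V, ↑A ⊆ S ∧ A.card = k ∧
      ∀ u ∈ A, ∀ v ∈ A, ¬ (parentGraph p).Adj u v} := by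
  refine ⟨Fintype.card V, ?_⟩
  rintro k ⟨A, -, rfl, -⟩
  simpa [Finset.card_univ] using A.card_le_univ

lemma le_maxIndep {S : Set V} {A : Finset V} (hAS : ↑A ⊆ S)
    (hind : ∀ u ∈ A, ∀ v ∈ A, ¬ (parentGraph p).Adj u v) :
    A.card ≤ maxIndep p S :=
  le_csSup (maxIndep_set_bddAbove p S) ⟨A, hAS, rfl, hind⟩

lemma maxIndep_le {S : Set V} {m : ℕ}
    (hm : ∀ A : Finset V, ↑A ⊆ S → (∀ u ∈ A, ∀ v ∈ A, ¬ (parentGraph p).Adj u v) →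
      A.card ≤ m) : maxIndep p S ≤ m := by
  refine csSup_le (maxIndep_set_nonempty p S) ?_
  rintro k ⟨A, hAS, rfl, hind⟩
  exact hm A hAS hind

lemma exists_maxIndep (S : Set V) :
    ∃ A : Finset V, ↑A ⊆ S ∧ A.card = maxIndep p S ∧
      ∀ u ∈ A, ∀ v ∈ A, ¬ (parentGraph p).Adj u v :=
  Nat.sSup_mem (maxIndep_set_nonempty p S) (maxIndep_set_bddAbove p S)

lemma layeredIndepSetOn_ncard {r : V} (h : IsRootedTree p r) :
    ∀ (n : ℕ) (S : Set V), S.ncard = n →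
      (layeredIndepSetOn p S).ncard = maxIndep p S := by
  classical
  intro n
  induction n using Nat.strong_induction_on with
  | _ n IH =>
    intro S hn
    rcases S.eq_empty_or_nonempty with rfl | hne
    · -- empty case
      have hL : ∀ ℓ, layerFrom p (∅ : Set V) ℓ = ∅ := fun ℓ =>
        Set.subset_empty_iff.mp (layerFrom_subset p ∅ ℓ)
      have h1 : layeredIndepSetOn p (∅ : Set V) = ∅ := by
        refine Set.subset_empty_iff.mp (Set.iUnion_subset fun ℓ => ?_)
        rw [hL ℓ]
        rintro x ⟨hx, -⟩
        exact hx.elim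
      have h2 : maxIndep p (∅ : Set V) = 0 := by
        refine le_antisymm (maxIndep_le p ?_) (Nat.zero_le _)
        intro A hAS _
        have : A = ∅ := Finset.coe_eq_empty.mp (Set.subset_empty_iff.mp hAS)
        simp [this]
      rw [h1, h2, Set.ncard_empty]
    · -- nonempty case
      set S₁ := layerStep p S with hS₁def
      set Lf := leafIn p S with hLfdef
      have hLfne : Lf.Nonempty := exists_leafIn p h hne
      have hLfS₁ : ∀ x ∈ Lf, x ∉ S₁ := by
        intro x hx hx1
        exact hx1.2 (Or.inl hx)
      have hssub : S₁ ⊂ S := by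
        obtain ⟨x, hx⟩ := hLfne
        exact (Set.ssubset_iff_of_subset (layerStep_subset p S)).mpr
          ⟨x, hx.1, hLfS₁ x hx⟩
      have hcard1 : S₁.ncard < n := hn ▸ Set.ncard_lt_ncard hssub S.toFinite
      have hIH : (layeredIndepSetOn p S₁).ncard = maxIndep p S₁ :=
        IH S₁.ncard hcard1 S₁ rfl
      have hdisj : Disjoint Lf (layeredIndepSetOn p S₁) := by
        rw [Set.disjoint_left]
        intro x hx hx1
        exact hLfS₁ x hx (layeredIndepSetOn_subset p S₁ hx1)
      have hsplit : (layeredIndepSetOn p S).ncard = Lf.ncard + (layeredIndepSetOn p S₁).ncard := by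
        rw [layeredIndepSetOn_eq]
        exact Set.ncard_union_eq hdisj Lf.toFinite (layeredIndepSetOn p S₁).toFinite
      -- it remains to show: Lf.ncard + maxIndep p S₁ = maxIndep p S
      have hmain : maxIndep p S = Lf.ncard + maxIndep p S₁ := by
        apply le_antisymm
        · -- upper bound
          refine maxIndep_le p ?_
          intro A hAS hind
          set A₁ := A.filter (· ∈ S₁) with hA₁
          set A₂ := A.filter (· ∉ S₁) with hA₂
          have hcardsum : A₁.card + A₂.card = A.card :=
            Finset.card_filter_add_card_filter_not (· ∈ S₁)
          have hA₁le : A₁.card ≤ maxIndep p S₁ := by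
            refine le_maxIndep p ?_ ?_
            · intro x hx
              exact (Finset.mem_filter.mp hx).2
            · intro u hu v hv
              exact hind u (Finset.filter_subset _ _ hu) v (Finset.filter_subset _ _ hv)
          have hA₂le : A₂.card ≤ Lf.ncard := by
            -- injective map from A₂ into the leaves
            set f : V → V := fun v =>
              if v ∈ Lf then v
              else if hv2 : ∃ u ∈ Lf, u ≠ v ∧ p u = v then hv2.choose else v with hf
            have hfprop : ∀ v ∈ A₂, f v ∈ Lf ∧ (v ∉ Lf → p (f v) = v ∧ f v ≠ v) := by
              intro v hv
              have hvA : v ∈ A := Finset.filter_subset _ _ hv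
              have hvS : v ∈ S := hAS hvA
              have hvnS₁ : v ∉ S₁ := (Finset.mem_filter.mp hv).2
              by_cases hvLf : v ∈ Lf
              · refine ⟨by simp [hf, hvLf], fun hc => absurd hvLf hc⟩
              · have hvP : ∃ u ∈ Lf, u ≠ v ∧ p u = v := by
                  by_contra hcon
                  exact hvnS₁ ⟨hvS, by
                    rintro (h1 | h2)
                    · exact hvLf h1
                    · exact hcon h2.2⟩
                have hfv : f v = hvP.choose := by simp [hf, hvLf, hvP]
                obtain ⟨hu1, hu2, hu3⟩ := hvP.choose_spec
                exact ⟨hfv ▸ hu1, fun _ => ⟨hfv ▸ hu3, hfv ▸ hu2⟩⟩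
            have hinj : Set.InjOn f ↑A₂ := by
              intro v hv w hw hfvw
              obtain ⟨hfv1, hfv2⟩ := hfprop v hv
              obtain ⟨hfw1, hfw2⟩ := hfprop w hw
              by_cases hvLf : v ∈ Lf <;> by_cases hwLf : w ∈ Lf
              · simpa [hf, hvLf, hwLf] using hfvw
              · -- v ∈ Lf, w ∉ Lf : then f w is a leaf child of w equal to v
                exfalso
                obtain ⟨hpw, hneww⟩ := hfw2 hwLf
                have hfveq : f v = v := by simp [hf, hvLf]
                have hfvw' : v = f w := hfveq ▸ hfvw
                have hvw : p v = w := by rw [hfvw']; exact hpw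
                have hne : v ≠ w := by rw [hfvw']; exact hneww
                refine hind v (Finset.filter_subset _ _ hv) w (Finset.filter_subset _ _ hw) ?_
                rw [parentGraph_adj]
                exact ⟨hne, Or.inl hvw⟩
              · exfalso
                obtain ⟨hpv, hnevv⟩ := hfv2 hvLf
                have hfweq : f w = w := by simp [hf, hwLf]
                have hfvw' : f v = w := hfvw.trans hfweq
                have hwv : p w = v := by rw [← hfvw']; exact hpv
                have hne : w ≠ v := by rw [← hfvw']; exact hnevv
                refine hind v (Finset.filter_subset _ _ hv) w (Finset.filter_subset _ _ hw) ?_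
                rw [parentGraph_adj]
                exact ⟨Ne.symm hne, Or.inr hwv⟩
              · obtain ⟨hpv, -⟩ := hfv2 hvLf
                obtain ⟨hpw, -⟩ := hfw2 hwLf
                rw [← hpv, ← hpw, hfvw]
            have himg : f '' ↑A₂ ⊆ Lf := by
              rintro x ⟨v, hv, rfl⟩
              exact (hfprop v hv).1
            calc A₂.card = (↑A₂ : Set V).ncard := (Set.ncard_coe_finset A₂).symm
              _ = (f '' ↑A₂).ncard := (Set.ncard_image_of_injOn hinj).symm
              _ ≤ Lf.ncard := Set.ncard_le_ncard himg Lf.toFinite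
          omega
        · -- lower bound
          obtain ⟨A₁, hA₁S, hA₁card, hA₁ind⟩ := exists_maxIndep p S₁
          set B := A₁ ∪ Lf.toFinite.toFinset with hB
          have hLfFin : ∀ x, x ∈ Lf.toFinite.toFinset ↔ x ∈ Lf := fun x =>
            Set.Finite.mem_toFinset _
          have hdisjB : Disjoint A₁ Lf.toFinite.toFinset := by
            rw [Finset.disjoint_left]
            intro x hx hx2
            exact hLfS₁ x ((hLfFin x).mp hx2) (hA₁S hx)
          have hBcard : B.card = A₁.card + Lf.ncard := by
            rw [hB, Finset.card_union_of_disjoint hdisjB,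
              Set.ncard_eq_toFinset_card Lf Lf.toFinite]
          have hBS : ↑B ⊆ S := by
            intro x hx
            rw [hB] at hx
            simp only [Finset.coe_union, Set.mem_union, Finset.mem_coe] at hx
            rcases hx with hx | hx
            · exact layerStep_subset p S (hA₁S hx)
            · exact ((hLfFin x).mp hx).1
          have hBind : ∀ u ∈ B, ∀ v ∈ B, ¬ (parentGraph p).Adj u v := by
            intro u hu v hv
            rw [hB, Finset.mem_union] at hu hv
            rcases hu with hu | hu <;> rcases hv with hv | hv
            · exact hA₁ind u hu v hv
            · exact layerStep_nonadj_leaf p (hA₁S hu) ((hLfFin v).mp hv)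
            · intro hadj
              exact layerStep_nonadj_leaf p (hA₁S hv) ((hLfFin u).mp hu) hadj.symm
            · exact leafIn_pairwise_nonadj p ((hLfFin u).mp hu) ((hLfFin v).mp hv)
          have := le_maxIndep p hBS hBind
          omega
      rw [hsplit, hIH, hmain]

lemma indepNum_eq_maxIndep : indepNum (parentGraph p) = maxIndep p Set.univ := by
  unfold indepNum maxIndep
  congr 1
  ext k
  simp only [Set.mem_setOf_eq]
  constructor
  · rintro ⟨A, hc, hi⟩; exact ⟨A, Set.subset_univ _, hc, hi⟩
  · rintro ⟨A, -, hc, hi⟩; exact ⟨A, hc, hi⟩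

end AuxLIS

/-- For every finite rooted tree, the layered independent set is a maximum independent
set: it is independent and its cardinality is the independence number. -/
theorem layeredIndepSet_is_maximum {V : Type*} [Fintype V] (p : V → V) (r : V)
    (h : IsRootedTree p r) :
    (∀ u ∈ layeredIndepSet p, ∀ v ∈ layeredIndepSet p, ¬ (parentGraph p).Adj u v) ∧
      (layeredIndepSet p).ncard = indepNum (parentGraph p) := by
  constructor
  · exact layeredIndepSetOn_indep p Set.univ
  · rw [indepNum_eq_maxIndep p]
    exact layeredIndepSetOn_ncard p h Set.univ.ncard Set.univ rfl
end

section
/- Let T be a finite rooted tree and v a vertex of T. Then v belongs to the layered independent set of T if and only if v belongs to the layered independent set of the fringe tree T(v). -/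
open MeasureTheory ProbabilityTheory Filter Asymptotics

/-- A vertex `v` of a finite rooted tree belongs to the layered independent set of the
tree iff it belongs to the layered independent set of the fringe tree rooted at `v`. -/
theorem mem_layeredIndepSet_iff_mem_fringe {V : Type*} [Fintype V] (p : V → V) (r : V)
    (h : IsRootedTree p r) (v : V) :
    v ∈ layeredIndepSet p ↔ v ∈ layeredIndepSetOn p (descSet p v) := by
  set D := descSet p v with hDdef
  have hD : ∀ u : V, p u ∈ D → u ∈ D := by
    rintro u ⟨k, hk⟩
    exact ⟨k + 1, by simpa [Function.iterate_succ_apply] using hk⟩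
  have hleaf : ∀ S : Set V, leafIn p (S ∩ D) = leafIn p S ∩ D := by
    intro S
    ext u
    constructor
    · rintro ⟨⟨huS, huD⟩, hne⟩
      refine ⟨⟨huS, fun w hwS hwu hpw => ?_⟩, huD⟩
      exact hne w ⟨hwS, hD w (hpw ▸ huD)⟩ hwu hpw
    · rintro ⟨⟨huS, hne⟩, huD⟩
      exact ⟨⟨huS, huD⟩, fun w hw hwu => hne w hw.1 hwu⟩
  have hpar : ∀ S : Set V,
      {w | w ∈ S ∩ D ∧ ∃ u ∈ leafIn p S ∩ D, u ≠ w ∧ p u = w}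
        = {w | w ∈ S ∧ ∃ u ∈ leafIn p S, u ≠ w ∧ p u = w} ∩ D := by
    intro S
    ext w
    constructor
    · rintro ⟨⟨hwS, hwD⟩, u, ⟨huL, _⟩, hne, hpu⟩
      exact ⟨⟨hwS, u, huL, hne, hpu⟩, hwD⟩
    · rintro ⟨⟨hwS, u, huL, hne, hpu⟩, hwD⟩
      exact ⟨⟨hwS, hwD⟩, u, ⟨huL, hD u (hpu ▸ hwD)⟩, hne, hpu⟩
  have hstep : ∀ S : Set V, layerStep p (S ∩ D) = layerStep p S ∩ D := by
    intro S
    unfold layerStep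
    rw [hleaf S, hpar S]
    ext u
    simp only [Set.mem_diff, Set.mem_inter_iff, Set.mem_union]
    tauto
  have hlayer : ∀ ℓ : ℕ, layerFrom p D ℓ = layerFrom p Set.univ ℓ ∩ D := by
    intro ℓ
    induction ℓ with
    | zero => simp [layerFrom]
    | succ n ih => simp [layerFrom, ih, hstep]
  have hvD : v ∈ D := ⟨0, rfl⟩
  simp only [layeredIndepSet, layeredIndepSetOn, Set.mem_iUnion]
  constructor
  · rintro ⟨ℓ, hℓ⟩
    exact ⟨ℓ, by rw [hlayer ℓ, hleaf]; exact ⟨hℓ, hvD⟩⟩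
  · rintro ⟨ℓ, hℓ⟩
    rw [hlayer ℓ, hleaf] at hℓ
    exact ⟨ℓ, hℓ.1⟩
end

section
/- Let (p̂_n)_{n≥1} be the real sequence defined by p̂_1 = 1 and p̂_n = (1/(n−1)) Σ_{j=1}^{n−1} (1 − p̂_j) p̂_{n−j} for n ≥ 2. Then for every real z with −1 < z < 1, the power series P̂(z) = Σ_{k≥1} p̂_k z^k converges and P̂(z) = z / ((1 − z)(1 − log(1 − z))). -/
/-!
Let `L = 1 - log (1 - X) = 1 + Σ Xⁿ/n`, so that `L' = 1/(1 - X)`, and let `Q` be the formal power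
series `X / ((1 - X) L)`. Differentiating `Q L = X/(1 - X)` shows that `Q` solves the Riccati
equation `X Q' - Q = (X/(1 - X) - Q) Q`, whose coefficientwise form is exactly the recurrence
defining `p̂`; hence `p̂ₙ` is the `n`-th coefficient of `Q`. The recurrence makes `p̂ₙ` an average
of numbers in `[0, 1]`, so both `Q` and `L` have bounded coefficients, and for `|z| < 1` the Cauchy
product of their series converges absolutely to the value `z/(1 - z)` of `Q L`.
-/

open PowerSeries

theorem Finset.Nat.sum_antidiagonal_eq_sum_Icc {M : Type*} [AddCommMonoid M] (f : ℕ → ℕ → M)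
    (hf : ∀ j, f 0 j = 0) (hf' : ∀ i, f i 0 = 0) (n : ℕ) :
    ∑ kl ∈ antidiagonal n, f kl.1 kl.2 = ∑ j ∈ Icc 1 (n - 1), f j (n - j) := by
  rw [sum_antidiagonal_eq_sum_range_succ f n]
  refine (sum_subset (fun k hk => ?_) fun k hk hk' => ?_).symm
  · simp only [Finset.mem_Icc, Finset.mem_range] at hk ⊢
    omega
  · simp only [Finset.mem_Icc, Finset.mem_range] at hk hk'
    obtain rfl | rfl : k = 0 ∨ k = n := by omega
    · exact hf _
    · simpa using hf' k

namespace PowerSeries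

theorem derivative_mk_one {R : Type*} [CommRing R] : d⁄dX R (mk 1 : R⟦X⟧) = mk 1 ^ 2 := by
  ext n
  rw [coeff_derivative, show (2 : ℕ) = 1 + 1 from rfl, mk_one_pow_eq_mk_choose_add]
  simp [add_comm]

theorem coeff_X_mul_mk_one {R : Type*} [Semiring R] (n : ℕ) :
    coeff n (X * mk 1 : R⟦X⟧) = if n = 0 then 0 else 1 := by
  cases n <;> simp [coeff_succ_X_mul]

open Finset in
theorem hasSum_coeff_mul_mul_pow {R : Type*} [NormedCommRing R] [CompleteSpace R] {f g : R⟦X⟧}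
    {z A B : R} (hf : Summable fun n => ‖coeff n f * z ^ n‖)
    (hg : Summable fun n => ‖coeff n g * z ^ n‖) (hA : HasSum (fun n => coeff n f * z ^ n) A)
    (hB : HasSum (fun n => coeff n g * z ^ n) B) :
    HasSum (fun n => coeff n (f * g) * z ^ n) (A * B) := by
  have hterm : ∀ n, coeff n (f * g) * z ^ n =
      ∑ kl ∈ antidiagonal n, coeff kl.1 f * z ^ kl.1 * (coeff kl.2 g * z ^ kl.2) := by
    intro n
    rw [coeff_mul, Finset.sum_mul]
    refine Finset.sum_congr rfl fun kl hkl => ?_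
    rw [← mem_antidiagonal.mp hkl, pow_add]
    ring
  simp only [hterm]
  rw [← hA.tsum_eq, ← hB.tsum_eq, tsum_mul_tsum_eq_tsum_sum_antidiagonal_of_summable_norm hf hg]
  exact (summable_norm_sum_mul_antidiagonal_of_summable_norm hf hg).of_norm.hasSum

theorem hasSum_coeff_X_mul_mk_one_mul_pow {z : ℝ} (hz : |z| < 1) :
    HasSum (fun n => coeff n (X * mk 1 : ℝ⟦X⟧) * z ^ n) (z / (1 - z)) := by
  have hshift : (fun n : ℕ => coeff (n + 1) (X * mk 1 : ℝ⟦X⟧) * z ^ (n + 1)) =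
      fun n : ℕ => z * z ^ n := by
    ext n
    rw [coeff_succ_X_mul, coeff_mk, Pi.one_apply, one_mul, pow_succ']
  refine (hasSum_nat_add_iff' 1).mp ?_
  rw [hshift]
  simpa [div_eq_mul_inv] using (hasSum_geometric_of_abs_lt_one hz).mul_left z

end PowerSeries

theorem summable_norm_mul_pow_of_abs_le_one {a : ℕ → ℝ} (ha : ∀ n, |a n| ≤ 1) {z : ℝ}
    (hz : |z| < 1) : Summable fun n => ‖a n * z ^ n‖ := by
  refine (summable_geometric_of_lt_one (abs_nonneg z) hz).of_nonneg_of_le (fun _ => norm_nonneg _)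
    fun n => ?_
  rw [Real.norm_eq_abs, abs_mul, abs_pow]
  exact mul_le_of_le_one_left (by positivity) (ha n)

def IsRRTSequence (p : ℕ → ℝ) : Prop :=
  p 1 = 1 ∧ ∀ n : ℕ, 2 ≤ n →
    p n = (1 / ((n : ℝ) - 1)) * ∑ j ∈ Finset.Icc 1 (n - 1), (1 - p j) * p (n - j)

namespace IsRRTSequence

variable {p : ℕ → ℝ}

theorem eq_of_one_le {q : ℕ → ℝ} (hp : IsRRTSequence p) (hq : IsRRTSequence q) {n : ℕ}
    (hn : 1 ≤ n) : p n = q n := by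
  induction n using Nat.strong_induction_on with
  | _ n ih =>
    obtain rfl | hn2 : n = 1 ∨ 2 ≤ n := by omega
    · rw [hp.1, hq.1]
    · rw [hp.2 n hn2, hq.2 n hn2]
      congr 1
      refine Finset.sum_congr rfl fun j hj => ?_
      rw [Finset.mem_Icc] at hj
      rw [ih j (by omega) (by omega), ih (n - j) (by omega) (by omega)]

theorem mem_unitInterval (hp : IsRRTSequence p) {n : ℕ} (hn : 1 ≤ n) : p n ∈ unitInterval := by
  induction n using Nat.strong_induction_on with
  | _ n ih =>
    obtain rfl | hn2 : n = 1 ∨ 2 ≤ n := by omega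
    · simp [hp.1]
    · have hterm : ∀ j ∈ Finset.Icc 1 (n - 1), (1 - p j) * p (n - j) ∈ unitInterval := by
        intro j hj
        rw [Finset.mem_Icc] at hj
        exact unitInterval.mul_mem (Set.Icc.mem_iff_one_sub_mem.mp (ih j (by omega) (by omega)))
          (ih (n - j) (by omega) (by omega))
      have hsum : ∑ j ∈ Finset.Icc 1 (n - 1), (1 - p j) * p (n - j) ≤ (n : ℝ) - 1 := by
        calc _ ≤ (Finset.Icc 1 (n - 1)).card • (1 : ℝ) :=
              Finset.sum_le_card_nsmul _ _ _ fun j hj => (hterm j hj).2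
          _ = (n : ℝ) - 1 := by simp [Nat.cast_sub (by omega : 1 ≤ n)]
      have hn1 : (0 : ℝ) < n - 1 := by
        have : (2 : ℝ) ≤ n := by exact_mod_cast hn2
        linarith
      rw [hp.2 n hn2, one_div, ← div_eq_inv_mul]
      exact ⟨div_nonneg (Finset.sum_nonneg fun j hj => (hterm j hj).1) hn1.le,
        div_le_one_of_le₀ hsum hn1.le⟩

end IsRRTSequence

noncomputable def oneSubLogOneSub : ℝ⟦X⟧ := mk fun n => if n = 0 then 1 else (n : ℝ)⁻¹

theorem constantCoeff_oneSubLogOneSub : constantCoeff oneSubLogOneSub = 1 := by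
  simp [oneSubLogOneSub, ← coeff_zero_eq_constantCoeff_apply]

theorem derivative_oneSubLogOneSub : d⁄dX ℝ oneSubLogOneSub = mk 1 := by
  ext n
  rw [coeff_derivative, oneSubLogOneSub, coeff_mk, coeff_mk, if_neg n.succ_ne_zero]
  push_cast
  field_simp
  simp

theorem abs_coeff_oneSubLogOneSub_le_one (n : ℕ) : |coeff n oneSubLogOneSub| ≤ 1 := by
  rcases n with _ | n
  · simp [oneSubLogOneSub]
  · rw [oneSubLogOneSub, coeff_mk, if_neg n.succ_ne_zero, abs_inv, Nat.abs_cast]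
    exact inv_le_one_of_one_le₀ (by simp)

theorem hasSum_coeff_oneSubLogOneSub_mul_pow {z : ℝ} (hz : |z| < 1) :
    HasSum (fun n => coeff n oneSubLogOneSub * z ^ n) (1 - Real.log (1 - z)) := by
  have hshift : (fun n : ℕ => coeff (n + 1) oneSubLogOneSub * z ^ (n + 1)) =
      fun n : ℕ => z ^ (n + 1) / (n + 1) := by
    ext n
    simp only [oneSubLogOneSub, coeff_mk, n.succ_ne_zero, if_false, Nat.cast_add, Nat.cast_one]
    ring
  refine (hasSum_nat_add_iff' 1).mp ?_
  rw [hshift]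
  simpa [oneSubLogOneSub] using Real.hasSum_pow_div_log_of_abs_lt_one hz

noncomputable def rrtSeries : ℝ⟦X⟧ := X * mk 1 * oneSubLogOneSub⁻¹

theorem rrtSeries_mul_oneSubLogOneSub : rrtSeries * oneSubLogOneSub = X * mk 1 := by
  rw [rrtSeries, mul_assoc, PowerSeries.inv_mul_cancel _ (by simp [constantCoeff_oneSubLogOneSub]),
    mul_one]

theorem constantCoeff_rrtSeries : constantCoeff rrtSeries = 0 := by
  simp [rrtSeries]

theorem coeff_one_rrtSeries : coeff 1 rrtSeries = 1 := by
  have h := congrArg (coeff 1) rrtSeries_mul_oneSubLogOneSub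
  simpa [coeff_mul, Finset.Nat.antidiagonal_succ, constantCoeff_rrtSeries, oneSubLogOneSub,
    coeff_X_mul_mk_one] using h

theorem rrtSeries_riccati :
    X * d⁄dX ℝ rrtSeries - rrtSeries = (X * mk 1 - rrtSeries) * rrtSeries := by
  have hL : oneSubLogOneSub ≠ 0 := fun h => by
    simpa [h] using constantCoeff_oneSubLogOneSub
  have hmul := rrtSeries_mul_oneSubLogOneSub
  have hderiv := congrArg (d⁄dX ℝ) hmul
  simp only [Derivation.leibniz, derivative_oneSubLogOneSub, derivative_X, derivative_mk_one,
    smul_eq_mul] at hderiv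
  refine mul_right_cancel₀ hL ?_
  linear_combination X * hderiv + (rrtSeries - X * mk 1 - 1) * hmul

theorem isRRTSequence_coeff_rrtSeries : IsRRTSequence (coeff · rrtSeries) := by
  refine ⟨coeff_one_rrtSeries, fun n hn => ?_⟩
  obtain ⟨m, rfl⟩ : ∃ m, n = m + 1 := ⟨n - 1, by omega⟩
  have h := congrArg (coeff (m + 1)) rrtSeries_riccati
  rw [map_sub, coeff_succ_X_mul, coeff_derivative, coeff_mul,
    Finset.Nat.sum_antidiagonal_eq_sum_Icc
      (fun i j => coeff i (X * mk 1 - rrtSeries) * coeff j rrtSeries)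
      (by simp [constantCoeff_rrtSeries]) (by simp [constantCoeff_rrtSeries])] at h
  rw [Finset.sum_congr rfl fun j hj => by
    rw [map_sub, coeff_X_mul_mk_one, if_neg (by simp at hj; omega)]] at h
  have hm : (m : ℝ) ≠ 0 := by norm_cast; omega
  simp only [Nat.add_sub_cancel, Nat.cast_add, Nat.cast_one, add_sub_cancel_right] at h ⊢
  rw [← h]
  field_simp
  ring

theorem abs_coeff_rrtSeries_le_one (n : ℕ) : |coeff n rrtSeries| ≤ 1 := by
  rcases Nat.eq_zero_or_pos n with rfl | hn
  · simp [constantCoeff_rrtSeries]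
  · have h := isRRTSequence_coeff_rrtSeries.mem_unitInterval hn
    exact abs_le.mpr ⟨by linarith [h.1], h.2⟩

theorem hasSum_coeff_rrtSeries_mul_pow {z : ℝ} (hz1 : -1 < z) (hz2 : z < 1) :
    HasSum (fun n => coeff n rrtSeries * z ^ n) (z / ((1 - z) * (1 - Real.log (1 - z)))) := by
  have hz : |z| < 1 := abs_lt.mpr ⟨hz1, hz2⟩
  have hQ := summable_norm_mul_pow_of_abs_le_one abs_coeff_rrtSeries_le_one hz
  have hL := summable_norm_mul_pow_of_abs_le_one abs_coeff_oneSubLogOneSub_le_one hz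
  have hprod := hasSum_coeff_mul_mul_pow hQ hL hQ.of_norm.hasSum
    (hasSum_coeff_oneSubLogOneSub_mul_pow hz)
  rw [rrtSeries_mul_oneSubLogOneSub] at hprod
  have hval := hprod.unique (hasSum_coeff_X_mul_mk_one_mul_pow hz)
  have hlog : 0 < 1 - Real.log (1 - z) := by
    linarith [Real.log_le_sub_one_of_pos (by linarith : 0 < 1 - z)]
  rw [div_mul_eq_div_div, ← hval, mul_div_cancel_right₀ _ hlog.ne']
  exact hQ.of_norm.hasSum

/-- For the sequence `p̂` defined by `p̂₁ = 1` and
`p̂ₙ = (1/(n-1)) Σ_{j=1}^{n-1} (1 - p̂ⱼ) p̂_{n-j}` for `n ≥ 2`, the power series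
`Σ_{k≥1} p̂ₖ zᵏ` converges for `-1 < z < 1` with sum `z / ((1-z)(1 - log(1-z)))`. -/
theorem rrt_generating_function (p : ℕ → ℝ) (h1 : p 1 = 1)
    (hrec : ∀ n : ℕ, 2 ≤ n →
      p n = (1 / ((n : ℝ) - 1)) * ∑ j ∈ Finset.Icc 1 (n - 1), (1 - p j) * p (n - j))
    (z : ℝ) (hz1 : -1 < z) (hz2 : z < 1) :
    HasSum (fun k : ℕ => p (k + 1) * z ^ (k + 1))
      (z / ((1 - z) * (1 - Real.log (1 - z)))) := by
  have hp : IsRRTSequence p := ⟨h1, hrec⟩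
  have hcoeff (k : ℕ) : p (k + 1) = coeff (k + 1) rrtSeries :=
    hp.eq_of_one_le isRRTSequence_coeff_rrtSeries (Nat.le_add_left 1 k)
  have h := (hasSum_nat_add_iff' 1).mpr (hasSum_coeff_rrtSeries_mul_pow hz1 hz2)
  simp only [Finset.range_one, Finset.sum_singleton, coeff_zero_eq_constantCoeff_apply,
    constantCoeff_rrtSeries, zero_mul, sub_zero] at h
  simpa only [hcoeff] using h
end

section
/- Let (p̂_n)_{n≥1} be the real sequence defined by p̂_1 = 1 and p̂_n = (1/(n−1)) Σ_{j=1}^{n−1} (1 − p̂_j) p̂_{n−j} for n ≥ 2, and let P̂(z) = Σ_{k≥1} p̂_k z^k for −1 < z < 1. Then P̂ satisfies the Riccati differential equation z P̂'(z) = −P̂(z)² + P̂(z)/(1 − z) on (−1, 1). -/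
/-!
Write `q k = p̂ (k + 1)`. The recurrence reads `(m + 1) q (m + 1) = ∑_{i + l = m} (1 - q i) q l`,
which keeps `q` in `[0, 1]` by strong induction, so `P̂(z) = ∑ q k z^(k+1)` may be differentiated
termwise on `(-1, 1)`. Multiplying the recurrence by `z^(m+2)` and summing over `m`, the left side
becomes `z P̂' - P̂` and the right side the Cauchy product of `∑ (1 - q i) z^(i+1) = z/(1-z) - P̂`
with `P̂`.
-/

open Finset

section PowerSeries

variable {a b : ℕ → ℝ} {C D z : ℝ}

lemma summable_succ_mul_pow {r : ℝ} (hr : |r| < 1) :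
    Summable fun k : ℕ => ((k : ℝ) + 1) * r ^ k := by
  have hr' : ‖r‖ < 1 := by rwa [Real.norm_eq_abs]
  simpa [add_mul] using
    (summable_pow_mul_geometric_of_norm_lt_one 1 hr').add (summable_geometric_of_norm_lt_one hr')

lemma summable_norm_mul_pow_succ (ha : ∀ k, |a k| ≤ C) (hz : |z| < 1) :
    Summable fun k => ‖a k * z ^ (k + 1)‖ := by
  refine .of_nonneg_of_le (fun _ => norm_nonneg _) (fun k => ?_)
    ((summable_geometric_of_lt_one (abs_nonneg z) hz).mul_left (C * |z|))
  rw [Real.norm_eq_abs, abs_mul, abs_pow, pow_succ]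
  have := mul_le_mul_of_nonneg_right (ha k) (by positivity : 0 ≤ |z| ^ k * |z|)
  linarith

lemma abs_succ_mul_mul_pow_le (ha : ∀ k, |a k| ≤ C) {w r : ℝ} (hw : |w| ≤ r) (k : ℕ) :
    |((k : ℝ) + 1) * a k * w ^ k| ≤ C * (((k : ℝ) + 1) * r ^ k) := by
  have hbound : |a k| * |w| ^ k ≤ C * r ^ k :=
    mul_le_mul (ha k) (pow_le_pow_left₀ (abs_nonneg w) hw k) (by positivity)
      ((abs_nonneg _).trans (ha k))
  rw [abs_mul, abs_mul, abs_pow, abs_of_nonneg (by positivity : (0 : ℝ) ≤ k + 1), mul_assoc,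
    mul_left_comm C]
  exact mul_le_mul_of_nonneg_left hbound (by positivity)

lemma summable_succ_mul_mul_pow (ha : ∀ k, |a k| ≤ C) (hz : |z| < 1) :
    Summable fun k : ℕ => ((k : ℝ) + 1) * a k * z ^ k :=
  .of_norm_bounded ((summable_succ_mul_pow (by rwa [abs_abs])).mul_left C)
    (abs_succ_mul_mul_pow_le ha le_rfl)

lemma hasDerivAt_tsum_mul_pow_succ (ha : ∀ k, |a k| ≤ C) (hz : |z| < 1) :
    HasDerivAt (fun w => ∑' k : ℕ, a k * w ^ (k + 1))
      (∑' k : ℕ, ((k : ℝ) + 1) * a k * z ^ k) z := by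
  obtain ⟨r, hzr, hr1⟩ := exists_between hz
  have hr : |r| < 1 := by rwa [abs_of_nonneg ((abs_nonneg z).trans hzr.le)]
  have hz_mem : z ∈ Set.Ioo (-r) r := ⟨by linarith [neg_abs_le z], (le_abs_self z).trans_lt hzr⟩
  refine hasDerivAt_tsum_of_isPreconnected (g := fun k w => a k * w ^ (k + 1))
    (g' := fun k w => ((k : ℝ) + 1) * a k * w ^ k) ((summable_succ_mul_pow hr).mul_left C)
    isOpen_Ioo isPreconnected_Ioo (fun k w _ => ?_) (fun k w hw => ?_) hz_mem
    (summable_norm_mul_pow_succ ha hz).of_norm hz_mem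
  · exact ((hasDerivAt_pow (k + 1) w).const_mul (a k)).congr_deriv (by
      rw [Nat.add_sub_cancel, Nat.cast_succ]
      ring)
  · exact abs_succ_mul_mul_pow_le ha (abs_le.2 ⟨hw.1.le, hw.2.le⟩) k

lemma tsum_mul_pow_succ_mul_tsum_mul_pow_succ (ha : ∀ k, |a k| ≤ C) (hb : ∀ k, |b k| ≤ D)
    (hz : |z| < 1) :
    (∑' k : ℕ, a k * z ^ (k + 1)) * (∑' k : ℕ, b k * z ^ (k + 1)) =
      ∑' m : ℕ, (∑ x ∈ antidiagonal m, a x.1 * b x.2) * z ^ (m + 2) := by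
  rw [tsum_mul_tsum_eq_tsum_sum_antidiagonal_of_summable_norm (summable_norm_mul_pow_succ ha hz)
    (summable_norm_mul_pow_succ hb hz)]
  refine tsum_congr fun m => ?_
  rw [sum_mul]
  refine sum_congr rfl fun x hx => ?_
  rw [← mem_antidiagonal.1 hx]
  ring

lemma mul_tsum_succ_mul_mul_pow (ha : ∀ k, |a k| ≤ C) (hz : |z| < 1) :
    z * ∑' k : ℕ, ((k : ℝ) + 1) * a k * z ^ k =
      ∑' k : ℕ, a k * z ^ (k + 1) + ∑' m : ℕ, ((m : ℝ) + 1) * a (m + 1) * z ^ (m + 2) := by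
  have hs := (summable_succ_mul_mul_pow ha hz).mul_left z
  have hP := (summable_norm_mul_pow_succ ha hz).of_norm
  have hnat : Summable fun k : ℕ => (k : ℝ) * a k * z ^ (k + 1) :=
    (hs.sub hP).congr fun k => by ring
  calc z * ∑' k : ℕ, ((k : ℝ) + 1) * a k * z ^ k
      = ∑' k : ℕ, (a k * z ^ (k + 1) + k * a k * z ^ (k + 1)) := by
        rw [← tsum_mul_left]; exact tsum_congr fun k => by ring
    _ = _ := by
      rw [hP.tsum_add hnat, hnat.tsum_eq_zero_add]
      push_cast
      simp

lemma tsum_pow_succ (hz : |z| < 1) : ∑' k : ℕ, z ^ (k + 1) = z / (1 - z) := by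
  simp_rw [pow_succ, tsum_mul_right, tsum_geometric_of_abs_lt_one hz, div_eq_inv_mul]

lemma tsum_pow_succ_sub_tsum_mul_pow_succ (ha : ∀ k, |a k| ≤ C) (hz : |z| < 1) :
    ∑' k : ℕ, (1 - a k) * z ^ (k + 1) = z / (1 - z) - ∑' k : ℕ, a k * z ^ (k + 1) := by
  have hgeom : Summable fun k : ℕ => z ^ (k + 1) :=
    ((summable_geometric_of_abs_lt_one hz).mul_right z).congr fun k => (pow_succ z k).symm
  simp_rw [sub_mul, one_mul]
  rw [hgeom.tsum_sub (summable_norm_mul_pow_succ ha hz).of_norm, tsum_pow_succ hz]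

end PowerSeries

section Recurrence

variable {a : ℕ → ℝ}

lemma mem_Icc_of_succ_mul_eq_sum_antidiagonal (h0 : a 0 ∈ Set.Icc 0 1)
    (hrec : ∀ m : ℕ, ((m : ℝ) + 1) * a (m + 1) = ∑ x ∈ antidiagonal m, (1 - a x.1) * a x.2)
    (k : ℕ) : a k ∈ Set.Icc 0 1 := by
  induction k using Nat.strong_induction_on with
  | _ k ih =>
  obtain _ | m := k
  · exact h0
  have hterm : ∀ x ∈ antidiagonal m, (1 - a x.1) * a x.2 ∈ Set.Icc (0 : ℝ) 1 := by
    intro x hx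
    have := mem_antidiagonal.1 hx
    obtain ⟨h1l, h1u⟩ := ih x.1 (by omega)
    obtain ⟨h2l, h2u⟩ := ih x.2 (by omega)
    constructor <;> nlinarith
  have hsum_le : ∑ x ∈ antidiagonal m, (1 - a x.1) * a x.2 ≤ (m : ℝ) + 1 := by
    calc ∑ x ∈ antidiagonal m, (1 - a x.1) * a x.2 ≤ ∑ _x ∈ antidiagonal m, (1 : ℝ) :=
          sum_le_sum fun x hx => (hterm x hx).2
      _ = (m : ℝ) + 1 := by simp
  have hsum_nonneg := sum_nonneg fun x hx => (hterm x hx).1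
  rw [← hrec m] at hsum_le hsum_nonneg
  exact ⟨nonneg_of_mul_nonneg_right hsum_nonneg (by positivity),
    le_of_mul_le_mul_left (by linarith) (by positivity : (0 : ℝ) < m + 1)⟩

variable {C z : ℝ}

lemma mul_tsum_succ_mul_mul_pow_eq_riccati (ha : ∀ k, |a k| ≤ C)
    (hrec : ∀ m : ℕ, ((m : ℝ) + 1) * a (m + 1) = ∑ x ∈ antidiagonal m, (1 - a x.1) * a x.2)
    (hz : |z| < 1) :
    z * ∑' k : ℕ, ((k : ℝ) + 1) * a k * z ^ k =
      -(∑' k : ℕ, a k * z ^ (k + 1)) ^ 2 + (∑' k : ℕ, a k * z ^ (k + 1)) / (1 - z) := by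
  have h1a : ∀ k, |1 - a k| ≤ 1 + C := fun k => (abs_sub _ _).trans (by simp [ha k])
  rw [mul_tsum_succ_mul_mul_pow ha hz]
  simp_rw [hrec]
  rw [← tsum_mul_pow_succ_mul_tsum_mul_pow_succ h1a ha hz,
    tsum_pow_succ_sub_tsum_mul_pow_succ ha hz]
  have h1z : 1 - z ≠ 0 := by linarith [le_abs_self z]
  field_simp
  ring

end Recurrence

lemma rrt_recurrence_antidiagonal (p : ℕ → ℝ)
    (hrec : ∀ n : ℕ, 2 ≤ n →
      p n = (1 / ((n : ℝ) - 1)) * ∑ j ∈ Finset.Icc 1 (n - 1), (1 - p j) * p (n - j))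
    (m : ℕ) :
    ((m : ℝ) + 1) * p (m + 1 + 1) = ∑ x ∈ antidiagonal m, (1 - p (x.1 + 1)) * p (x.2 + 1) := by
  have hm : ((m + 1 + 1 : ℕ) : ℝ) - 1 = m + 1 := by push_cast; ring
  rw [hrec (m + 1 + 1) (by omega), hm, Nat.add_sub_cancel, ← mul_assoc, mul_one_div_cancel
    (by positivity), one_mul, ← Ico_add_one_right_eq_Icc, sum_Ico_eq_sum_range,
    Nat.sum_antidiagonal_eq_sum_range_succ_mk]
  refine sum_congr (by simp) fun i hi => ?_
  rw [add_comm 1 i, show m + 1 + 1 - (i + 1) = m - i + 1 by have := mem_range.1 hi; omega]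

/-- For the sequence `p̂` defined by `p̂₁ = 1` and
`p̂ₙ = (1/(n-1)) Σ_{j=1}^{n-1} (1 - p̂ⱼ) p̂_{n-j}` for `n ≥ 2`, the power series
`P̂(z) = Σ_{k≥1} p̂ₖ zᵏ` satisfies the Riccati equation
`z P̂'(z) = -P̂(z)² + P̂(z)/(1-z)` on `(-1, 1)`. -/
theorem rrt_generating_function_riccati (p : ℕ → ℝ) (h1 : p 1 = 1)
    (hrec : ∀ n : ℕ, 2 ≤ n →
      p n = (1 / ((n : ℝ) - 1)) * ∑ j ∈ Finset.Icc 1 (n - 1), (1 - p j) * p (n - j))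
    (z : ℝ) (hz1 : -1 < z) (hz2 : z < 1) :
    ∃ d : ℝ,
      HasDerivAt (fun w : ℝ => ∑' k : ℕ, p (k + 1) * w ^ (k + 1)) d z ∧
        z * d = -(∑' k : ℕ, p (k + 1) * z ^ (k + 1)) ^ 2 +
          (∑' k : ℕ, p (k + 1) * z ^ (k + 1)) / (1 - z) := by
  have hrec' := rrt_recurrence_antidiagonal p hrec
  have hbound (k : ℕ) : |p (k + 1)| ≤ 1 := by
    obtain ⟨hnonneg, hle⟩ := mem_Icc_of_succ_mul_eq_sum_antidiagonal (a := fun k => p (k + 1))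
      (by simp [h1]) hrec' k
    exact abs_le.2 ⟨by linarith, hle⟩
  have hz : |z| < 1 := abs_lt.2 ⟨hz1, hz2⟩
  exact ⟨_, hasDerivAt_tsum_mul_pow_succ hbound hz,
    mul_tsum_succ_mul_mul_pow_eq_riccati hbound hrec' hz⟩
end

section
/- Let (p̂_n)_{n≥1} be the real sequence defined by p̂_1 = 1 and p̂_n = (1/(n−1)) Σ_{j=1}^{n−1} (1 − p̂_j) p̂_{n−j} for n ≥ 2. Then Σ_{k=1}^∞ p̂_k / (k(k+1)) = ∫₀¹ 1/(1 − log x) dx (the Euler–Gompertz constant). -/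
open MeasureTheory Finset

/-! Write `Q(t) = ∑ₖ p̂ₖ₊₁ tᵏ`. The recurrence is a Cauchy-product identity saying that `Q` solves
the Riccati equation `Q' = ((1 - t)⁻¹ - Q) Q`; hence `G = (1 - t) Q` satisfies
`(1 / G)' = 1 / (1 - t)`, and `G(0) = 1` gives `G(t) = 1 / (1 - log (1 - t))`.
Since `∫₀¹ x (1 - x)ᵏ dx = 1 / ((k + 1)(k + 2))`, the series is `∫₀¹ x Q(1 - x) dx`; sum and
integral may be exchanged because `0 ≤ p̂ₙ ≤ 1`. -/

theorem summable_norm_mul_pow_of_abs_le {a : ℕ → ℝ} {C t : ℝ} (ha : ∀ k, |a k| ≤ C)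
    (ht : |t| < 1) : Summable fun k => ‖a k * t ^ k‖ := by
  refine .of_nonneg_of_le (fun _ => norm_nonneg _) (fun k => ?_)
    ((summable_geometric_of_lt_one (abs_nonneg t) ht).mul_left C)
  rw [Real.norm_eq_abs, abs_mul, abs_pow]
  exact mul_le_mul_of_nonneg_right (ha k) (by positivity)

theorem hasDerivAt_tsum_mul_pow {a : ℕ → ℝ} {C t : ℝ} (ha : ∀ k, |a k| ≤ C) (ht : |t| < 1) :
    HasDerivAt (fun x => ∑' k, a k * x ^ k) (∑' k, (k + 1) * a (k + 1) * t ^ k) t := by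
  obtain ⟨r, htr, hr1⟩ := exists_between ht
  have hr0 : 0 ≤ r := (abs_nonneg t).trans htr.le
  have hu : Summable fun n : ℕ => C * (n * r ^ (n - 1)) := by
    refine .mul_left C ((summable_nat_add_iff 1).mp ?_)
    simpa [add_mul] using
      (summable_pow_mul_geometric_of_norm_lt_one 1 (by rwa [Real.norm_of_nonneg hr0])).add
        (summable_geometric_of_lt_one hr0 hr1)
  have hbound : ∀ n, ∀ x ∈ Metric.ball (0 : ℝ) r,
      ‖a n * (n * x ^ (n - 1))‖ ≤ C * (n * r ^ (n - 1)) := by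
    intro n x hx
    rw [mem_ball_zero_iff, Real.norm_eq_abs] at hx
    rw [Real.norm_eq_abs, abs_mul, abs_mul, abs_pow, Nat.abs_cast]
    gcongr
    · exact (abs_nonneg _).trans (ha 0)
    · exact ha n
  have hmem : t ∈ Metric.ball (0 : ℝ) r := by rwa [mem_ball_zero_iff, Real.norm_eq_abs]
  refine (hasDerivAt_tsum_of_isPreconnected hu Metric.isOpen_ball (convex_ball 0 r).isPreconnected
    (fun n x _ => (hasDerivAt_pow n x).const_mul (a n)) hbound
    (Metric.mem_ball_self (htr.trans_le' (abs_nonneg t)))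
    (summable_norm_mul_pow_of_abs_le ha (by simp)).of_norm hmem).congr_deriv ?_
  rw [(Summable.of_norm_bounded hu fun n => hbound n t hmem).tsum_eq_zero_add]
  simp only [Nat.cast_zero, zero_mul, mul_zero, zero_add, Nat.cast_add_one, add_tsub_cancel_right]
  exact tsum_congr fun k => by ring

theorem tsum_mul_pow_mul_tsum_mul_pow {a b : ℕ → ℝ} {A B t : ℝ} (ha : ∀ k, |a k| ≤ A)
    (hb : ∀ k, |b k| ≤ B) (ht : |t| < 1) :
    (∑' k, a k * t ^ k) * (∑' k, b k * t ^ k) =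
      ∑' n, (∑ x ∈ antidiagonal n, a x.1 * b x.2) * t ^ n := by
  rw [tsum_mul_tsum_eq_tsum_sum_antidiagonal_of_summable_norm
    (summable_norm_mul_pow_of_abs_le ha ht) (summable_norm_mul_pow_of_abs_le hb ht)]
  refine tsum_congr fun n => ?_
  rw [sum_mul]
  refine sum_congr rfl fun x hx => ?_
  rw [← mem_antidiagonal.mp hx, pow_add]
  ring

def RRTRecurrence (p : ℕ → ℝ) : Prop :=
  ∀ n : ℕ, 2 ≤ n → p n = (1 / ((n : ℝ) - 1)) * ∑ j ∈ Finset.Icc 1 (n - 1), (1 - p j) * p (n - j)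

namespace RRTRecurrence

variable {p : ℕ → ℝ}

theorem mem_Icc (hrec : RRTRecurrence p) (h1 : p 1 = 1) (n : ℕ) (hn : 1 ≤ n) :
    p n ∈ Set.Icc 0 1 := by
  induction n using Nat.strong_induction_on with
  | _ n ih =>
    obtain rfl | hn2 := hn.eq_or_lt
    · simp [h1]
    have hterm : ∀ j ∈ Icc 1 (n - 1), (1 - p j) * p (n - j) ∈ Set.Icc 0 1 := by
      intro j hj
      rw [Finset.mem_Icc] at hj
      obtain ⟨hj0, hj1⟩ := ih j (by omega) hj.1
      obtain ⟨hk0, hk1⟩ := ih (n - j) (by omega) (by omega)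
      exact ⟨by nlinarith, by nlinarith⟩
    have hcard : ∑ _j ∈ Icc 1 (n - 1), (1 : ℝ) = (n : ℝ) - 1 := by
      simp [Nat.cast_sub hn]
    have hpos : (0 : ℝ) < n - 1 := by
      have : (2 : ℝ) ≤ n := by exact_mod_cast hn2
      linarith
    rw [hrec n hn2, one_div_mul_eq_div]
    refine ⟨div_nonneg (sum_nonneg fun j hj => (hterm j hj).1) hpos.le, ?_⟩
    rw [div_le_one hpos, ← hcard]
    exact sum_le_sum fun j hj => (hterm j hj).2

theorem succ_mul_eq_sum_antidiagonal (hrec : RRTRecurrence p) (k : ℕ) :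
    ((k : ℝ) + 1) * p (k + 2) = ∑ x ∈ antidiagonal k, (1 - p (x.1 + 1)) * p (x.2 + 1) := by
  have hk : ((k + 2 : ℕ) : ℝ) - 1 = k + 1 := by push_cast; ring
  rw [hrec (k + 2) (by omega), hk, ← mul_assoc, mul_one_div_cancel (by positivity), one_mul,
    Nat.sum_antidiagonal_eq_sum_range_succ (fun i j => (1 - p (i + 1)) * p (j + 1)),
    show k + 2 - 1 = k + 1 from rfl, ← Finset.Ico_add_one_right_eq_Icc, sum_Ico_eq_sum_range]
  refine sum_congr (by simp) fun j hj => ?_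
  rw [mem_range] at hj
  rw [add_comm 1 j]
  congr 2
  omega

theorem abs_le_one_and_abs_one_sub_le_one (hrec : RRTRecurrence p) (h1 : p 1 = 1) (k : ℕ) :
    |p (k + 1)| ≤ 1 ∧ |1 - p (k + 1)| ≤ 1 := by
  obtain ⟨h0, h1⟩ := hrec.mem_Icc h1 (k + 1) (by omega)
  exact ⟨abs_le.2 ⟨by linarith, h1⟩, abs_le.2 ⟨by linarith, by linarith⟩⟩

theorem hasDerivAt_tsum (hrec : RRTRecurrence p) (h1 : p 1 = 1) {t : ℝ} (ht : |t| < 1) :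
    HasDerivAt (fun x => ∑' k, p (k + 1) * x ^ k)
      (((1 - t)⁻¹ - ∑' k, p (k + 1) * t ^ k) * ∑' k, p (k + 1) * t ^ k) t := by
  have hp (k : ℕ) := (hrec.abs_le_one_and_abs_one_sub_le_one h1 k).1
  have hq (k : ℕ) := (hrec.abs_le_one_and_abs_one_sub_le_one h1 k).2
  have hgeom : ∑' k, (1 - p (k + 1)) * t ^ k = (1 - t)⁻¹ - ∑' k, p (k + 1) * t ^ k := by
    simp_rw [sub_mul, one_mul]
    rw [Summable.tsum_sub (summable_geometric_of_abs_lt_one ht)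
      (summable_norm_mul_pow_of_abs_le hp ht).of_norm, tsum_geometric_of_abs_lt_one ht]
  refine (hasDerivAt_tsum_mul_pow hp ht).congr_deriv ?_
  rw [← hgeom, tsum_mul_pow_mul_tsum_mul_pow hq hp ht]
  exact tsum_congr fun k => by rw [← hrec.succ_mul_eq_sum_antidiagonal k]

theorem one_le_tsum (hrec : RRTRecurrence p) (h1 : p 1 = 1) {t : ℝ} (ht : t ∈ Set.Ico 0 1) :
    1 ≤ ∑' k, p (k + 1) * t ^ k := by
  have ht' : |t| < 1 := by rw [abs_of_nonneg ht.1]; exact ht.2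
  have hsummable := (summable_norm_mul_pow_of_abs_le
    (hrec.abs_le_one_and_abs_one_sub_le_one h1 · |>.1) ht').of_norm
  simpa [h1] using hsummable.le_tsum 0
    fun k _ => mul_nonneg (hrec.mem_Icc h1 (k + 1) (by omega)).1 (pow_nonneg ht.1 k)

theorem hasDerivAt_inv_one_sub_mul_tsum_add_log (hrec : RRTRecurrence p) (h1 : p 1 = 1) {t : ℝ}
    (ht : t ∈ Set.Ico 0 1) :
    HasDerivAt (fun x => ((1 - x) * ∑' k, p (k + 1) * x ^ k)⁻¹ + Real.log (1 - x)) 0 t := by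
  have hQ : ∑' k, p (k + 1) * t ^ k ≠ 0 := (one_pos.trans_le (hrec.one_le_tsum h1 ht)).ne'
  have h1t : 1 - t ≠ 0 := by linarith [ht.2]
  have hG := ((hasDerivAt_id' t).const_sub 1).fun_mul (hrec.hasDerivAt_tsum h1 (t := t) (by
    rw [abs_of_nonneg ht.1]; exact ht.2))
  refine ((hG.fun_inv (mul_ne_zero h1t hQ)).fun_add
    (((hasDerivAt_id' t).const_sub 1).log h1t)).congr_deriv ?_
  field_simp
  ring

theorem one_sub_mul_tsum_eq (hrec : RRTRecurrence p) (h1 : p 1 = 1) {t : ℝ}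
    (ht : t ∈ Set.Ico 0 1) :
    (1 - t) * ∑' k, p (k + 1) * t ^ k = (1 - Real.log (1 - t))⁻¹ := by
  set H := fun x => ((1 - x) * ∑' k, p (k + 1) * x ^ k)⁻¹ + Real.log (1 - x)
  have hderiv : ∀ x ∈ Set.Icc 0 t, HasDerivAt H 0 x := fun x hx =>
    hrec.hasDerivAt_inv_one_sub_mul_tsum_add_log h1 ⟨hx.1, hx.2.trans_lt ht.2⟩
  have hconst := constant_of_has_deriv_right_zero
    (fun x hx => (hderiv x hx).continuousAt.continuousWithinAt)
    (fun x hx => (hderiv x (Set.Ico_subset_Icc_self hx)).hasDerivWithinAt) t ⟨ht.1, le_rfl⟩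
  have hQ0 : ∑' k, p (k + 1) * (0 : ℝ) ^ k = 1 := by
    rw [tsum_eq_single 0 fun k hk => by simp [hk]]
    simp [h1]
  have hH0 : H 0 = 1 := by simp [H, hQ0]
  rw [hH0, ← eq_sub_iff_add_eq] at hconst
  rw [← hconst, inv_inv]

end RRTRecurrence

theorem integral_mul_one_sub_pow (k : ℕ) :
    ∫ x in (0 : ℝ)..1, x * (1 - x) ^ k = 1 / ((k + 1) * (k + 2)) := by
  have h := intervalIntegral.integral_comp_sub_left (fun y : ℝ => y ^ k - y ^ (k + 1))
    (a := 0) (b := 1) 1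
  simp only [sub_self, sub_zero] at h
  rw [intervalIntegral.integral_congr (g := fun x => (1 - x) ^ k - (1 - x) ^ (k + 1))
    fun x _ => by ring, h, intervalIntegral.integral_sub
    (intervalIntegral.intervalIntegrable_pow k) (intervalIntegral.intervalIntegrable_pow (k + 1)),
    integral_pow, integral_pow]
  field_simp
  push_cast
  ring

theorem summable_div_add_one_mul_add_two {a : ℕ → ℝ} {C : ℝ} (ha : ∀ k, |a k| ≤ C) :
    Summable fun k : ℕ => a k / ((k + 1) * (k + 2)) := by
  have hsq : Summable fun k : ℕ => C * (((k + 1 : ℕ) : ℝ) ^ 2)⁻¹ :=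
    ((summable_nat_add_iff 1).mpr (Real.summable_nat_pow_inv.mpr one_lt_two)).mul_left C
  refine .of_norm_bounded hsq fun k => ?_
  rw [Real.norm_eq_abs, abs_div, abs_of_pos (by positivity : (0 : ℝ) < (k + 1) * (k + 2)),
    div_eq_mul_inv]
  push_cast
  exact mul_le_mul (ha k) (inv_anti₀ (by positivity) (by nlinarith)) (by positivity)
    ((abs_nonneg _).trans (ha 0))

/-- For the sequence `p̂` defined by `p̂₁ = 1` and
`p̂ₙ = (1/(n-1)) Σ_{j=1}^{n-1} (1 - p̂ⱼ) p̂_{n-j}` for `n ≥ 2`, we have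
`Σ_{k≥1} p̂ₖ/(k(k+1)) = ∫₀¹ 1/(1 - log x) dx`, the Euler–Gompertz constant. -/
theorem rrt_mean_constant_eq_gompertz (p : ℕ → ℝ) (h1 : p 1 = 1)
    (hrec : ∀ n : ℕ, 2 ≤ n →
      p n = (1 / ((n : ℝ) - 1)) * ∑ j ∈ Finset.Icc 1 (n - 1), (1 - p j) * p (n - j)) :
    HasSum (fun k : ℕ => p (k + 1) / (((k : ℝ) + 1) * ((k : ℝ) + 2)))
      (∫ x in (0:ℝ)..1, 1 / (1 - Real.log x)) := by
  have hrec : RRTRecurrence p := hrec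
  set F : ℕ → ℝ → ℝ := fun k x => p (k + 1) * (x * (1 - x) ^ k)
  have hF_integral (k : ℕ) : ∫ x in Set.Ioc 0 1, F k x = p (k + 1) / ((k + 1) * (k + 2)) := by
    rw [← intervalIntegral.integral_of_le zero_le_one, intervalIntegral.integral_const_mul,
      integral_mul_one_sub_pow, mul_one_div]
  have hF_norm (k : ℕ) : ∫ x in Set.Ioc 0 1, ‖F k x‖ = ∫ x in Set.Ioc 0 1, F k x :=
    setIntegral_congr_fun measurableSet_Ioc fun x hx => Real.norm_of_nonneg <|
      mul_nonneg (hrec.mem_Icc h1 (k + 1) (by omega)).1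
        (mul_nonneg hx.1.le (pow_nonneg (sub_nonneg.mpr hx.2) k))
  have hF_int (k : ℕ) : Integrable (F k) (volume.restrict (Set.Ioc 0 1)) :=
    (Continuous.intervalIntegrable (by fun_prop) 0 1).1
  have hF_tsum : ∀ x ∈ Set.Ioc (0 : ℝ) 1, ∑' k, F k x = 1 / (1 - Real.log x) := by
    intro x hx
    have h := hrec.one_sub_mul_tsum_eq h1 (t := 1 - x) ⟨by linarith [hx.2], by linarith [hx.1]⟩
    rw [sub_sub_cancel] at h
    rw [one_div, ← h, ← tsum_mul_left]
    exact tsum_congr fun k => by ring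
  have hsum := hasSum_integral_of_summable_integral_norm hF_int <| by
    simpa only [hF_norm, hF_integral] using
      summable_div_add_one_mul_add_two fun k => (hrec.abs_le_one_and_abs_one_sub_le_one h1 k).1
  rw [intervalIntegral.integral_of_le zero_le_one,
    ← setIntegral_congr_fun measurableSet_Ioc hF_tsum]
  simpa only [hF_integral] using hsum
end

section
/- Let (p_n)_{n≥0} be the real sequence defined by p_0 = 0 and p_n = (1/n) Σ_{j=0}^{n−1} (1 − p_j)(1 − p_{n−1−j}) for n ≥ 1. Then Σ_{k=0}^∞ 2 p_k / ((k+1)(k+2)) = 2(√5 − 3) ∫₀¹ (x^√5 − 1)/((3√5 − 7)x^√5 + 2) dx. -/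
/-!
The generating function `G(x) = ∑ pₙ xⁿ` satisfies, by the recurrence, the Riccati equation
`G' = (1/(1-x) - G)²`, so `w = (1 - x) G` solves `(1 - x) w' = (w - α)(w - β)` with
`α, β = (3 ∓ √5)/2` and `w(0) = 0`. Along such a solution
`(w - α)/((w - β)(1 - x)^(β - α))` is constant, which gives `w` in closed form.
Since `∫₀¹ xᵏ(1 - x) dx = 1/((k+1)(k+2))`, the series is `2∫₀¹ w`, and substituting
`x ↦ 1 - x` yields the stated integral.
-/

open Finset Set MeasureTheory

namespace BSTMean

section PowerSeries

variable {a : ℕ → ℝ} {C x : ℝ}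

lemma summable_mul_pow (ha : ∀ n, |a n| ≤ C) (hx : |x| < 1) :
    Summable fun n => a n * x ^ n := by
  refine Summable.of_norm_bounded ((summable_geometric_of_lt_one (abs_nonneg x) hx).mul_left C)
    fun n => ?_
  rw [norm_mul, norm_pow, Real.norm_eq_abs, Real.norm_eq_abs]
  exact mul_le_mul_of_nonneg_right (ha n) (by positivity)

lemma summable_natCast_mul_pow_pred {r : ℝ} (h0 : 0 ≤ r) (h1 : r < 1) :
    Summable fun n : ℕ => (n : ℝ) * r ^ (n - 1) := by
  rw [← summable_nat_add_iff 1]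
  have hr : ‖r‖ < 1 := by rwa [Real.norm_eq_abs, abs_of_nonneg h0]
  simpa [add_mul] using
    (summable_pow_mul_geometric_of_norm_lt_one 1 hr).add (summable_geometric_of_lt_one h0 h1)

lemma hasDerivAt_tsum_mul_pow (ha : ∀ n, |a n| ≤ C) (hx : |x| < 1) :
    HasDerivAt (fun y => ∑' n, a n * y ^ n)
      (∑' n : ℕ, ((n : ℝ) + 1) * a (n + 1) * x ^ n) x := by
  set r := (1 + |x|) / 2
  have hxr : |x| < r := by simp only [r]; linarith
  have hr1 : r < 1 := by simp only [r]; linarith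
  have hr0 : 0 < r := (abs_nonneg x).trans_lt hxr
  have hbound : ∀ n (y : ℝ), |y| ≤ r →
      ‖a n * ((n : ℝ) * y ^ (n - 1))‖ ≤ C * ((n : ℝ) * r ^ (n - 1)) := fun n y hy => by
    rw [Real.norm_eq_abs, abs_mul, abs_mul, abs_pow, Nat.abs_cast]
    exact mul_le_mul (ha n) (by gcongr) (by positivity) ((abs_nonneg _).trans (ha n))
  have hu := (summable_natCast_mul_pow_pred hr0.le hr1).mul_left C
  have hderiv := hasDerivAt_tsum_of_isPreconnected hu isOpen_Ioo (convex_Ioo (-r) r).isPreconnected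
    (fun n y _ => (hasDerivAt_pow n y).const_mul (a n))
    (fun n y hy => hbound n y (abs_lt.2 hy).le) (y₀ := 0) (by simp; linarith)
    (summable_mul_pow ha (by simp)) (abs_lt.1 hxr)
  refine hderiv.congr_deriv ?_
  rw [(Summable.of_norm_bounded hu fun n => hbound n x hxr.le).tsum_eq_zero_add]
  simp only [Nat.cast_zero, zero_mul, mul_zero, zero_add, Nat.add_sub_cancel, Nat.cast_add,
    Nat.cast_one]
  exact tsum_congr fun n => by ring

lemma tsum_mul_pow_sq (ha : ∀ n, |a n| ≤ C) (hx : |x| < 1) :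
    (∑' n, a n * x ^ n) ^ 2 = ∑' n, (∑ j ∈ range (n + 1), a j * a (n - j)) * x ^ n := by
  have hs : Summable fun n => ‖a n * x ^ n‖ := (summable_mul_pow ha hx).abs
  rw [sq, tsum_mul_tsum_eq_tsum_sum_range_of_summable_norm hs hs]
  refine tsum_congr fun n => ?_
  rw [Finset.sum_mul]
  refine Finset.sum_congr rfl fun j hj => ?_
  have hjn : j + (n - j) = n := Nat.add_sub_cancel' (Nat.lt_succ_iff.1 (mem_range.1 hj))
  calc a j * x ^ j * (a (n - j) * x ^ (n - j)) = a j * a (n - j) * x ^ (j + (n - j)) := by ring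
    _ = a j * a (n - j) * x ^ n := by rw [hjn]

end PowerSeries

section Sequence

variable {p : ℕ → ℝ}

lemma mem_Icc_of_rec (h0 : p 0 = 0)
    (hrec : ∀ n : ℕ, 1 ≤ n →
      p n = (1 / (n : ℝ)) * ∑ j ∈ range n, (1 - p j) * (1 - p (n - 1 - j))) :
    ∀ n, p n ∈ Icc (0 : ℝ) 1 := by
  intro n
  induction n using Nat.strong_induction_on with
  | _ n ih =>
    rcases n with _ | m
    · simp [h0]
    have hterm : ∀ j ∈ range (m + 1),
        (1 - p j) * (1 - p (m + 1 - 1 - j)) ∈ Icc (0 : ℝ) 1 := fun j hj => by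
      have h1 := ih j (by simp at hj; omega)
      have h2 := ih (m + 1 - 1 - j) (by omega)
      simp only [Set.mem_Icc] at h1 h2 ⊢
      constructor <;> nlinarith
    have hsum0 := Finset.sum_nonneg fun j hj => (hterm j hj).1
    have hsum1 := Finset.sum_le_card_nsmul _ _ 1 fun j hj => (hterm j hj).2
    simp only [card_range, nsmul_eq_mul, mul_one] at hsum1
    rw [hrec (m + 1) (by omega), one_div_mul_eq_div]
    exact ⟨div_nonneg hsum0 (by positivity), div_le_one_of_le₀ hsum1 (by positivity)⟩

lemma succ_mul_eq_sum
    (hrec : ∀ n : ℕ, 1 ≤ n →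
      p n = (1 / (n : ℝ)) * ∑ j ∈ range n, (1 - p j) * (1 - p (n - 1 - j))) (n : ℕ) :
    ((n : ℝ) + 1) * p (n + 1) = ∑ j ∈ range (n + 1), (1 - p j) * (1 - p (n - j)) := by
  rw [hrec (n + 1) n.succ_pos, Nat.add_sub_cancel, Nat.cast_succ]
  field_simp

end Sequence

section GeneratingFunction

variable {p : ℕ → ℝ} {x : ℝ}

noncomputable def genFun (p : ℕ → ℝ) (x : ℝ) : ℝ := ∑' n, p n * x ^ n

lemma genFun_zero : genFun p 0 = p 0 := by
  rw [genFun, tsum_eq_single 0 fun n hn => by simp [hn]]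
  simp

lemma genFun_const_mul (c : ℝ) : genFun (fun n => c * p n) x = c * genFun p x := by
  simp only [genFun, ← tsum_mul_left, mul_assoc]

lemma one_sub_tsum_mul_pow (hp : ∀ n, |p n| ≤ 1) (hx : |x| < 1) :
    ∑' n, (1 - p n) * x ^ n = (1 - x)⁻¹ - genFun p x := by
  have hgeom : Summable fun n => x ^ n := summable_geometric_of_abs_lt_one hx
  rw [← tsum_geometric_of_abs_lt_one hx, genFun, ← hgeom.tsum_sub (summable_mul_pow hp hx)]
  exact tsum_congr fun n => by ring

lemma hasDerivAt_genFun (hp : ∀ n, p n ∈ Icc (0 : ℝ) 1)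
    (hrec : ∀ n : ℕ,
      ((n : ℝ) + 1) * p (n + 1) = ∑ j ∈ range (n + 1), (1 - p j) * (1 - p (n - j)))
    (hx : |x| < 1) :
    HasDerivAt (genFun p) (((1 - x)⁻¹ - genFun p x) ^ 2) x := by
  have hp' : ∀ n, |p n| ≤ 1 := fun n => abs_le.2 ⟨by linarith [(hp n).1], (hp n).2⟩
  have hq : ∀ n, |1 - p n| ≤ 1 := fun n =>
    abs_le.2 ⟨by linarith [(hp n).2], by linarith [(hp n).1]⟩
  refine (hasDerivAt_tsum_mul_pow hp' hx).congr_deriv ?_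
  rw [← one_sub_tsum_mul_pow hp' hx, tsum_mul_pow_sq hq hx]
  simp only [hrec]

lemma hasDerivAt_one_sub_mul_genFun (hp : ∀ n, p n ∈ Icc (0 : ℝ) 1)
    (hrec : ∀ n : ℕ,
      ((n : ℝ) + 1) * p (n + 1) = ∑ j ∈ range (n + 1), (1 - p j) * (1 - p (n - j)))
    (hx : |x| < 1) :
    HasDerivAt (fun y => (1 - y) * genFun p y)
      ((((1 - x) * genFun p x) ^ 2 - 3 * ((1 - x) * genFun p x) + 1) / (1 - x)) x := by
  have hx1 : 1 - x ≠ 0 := by linarith [(abs_lt.1 hx).2]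
  refine (((hasDerivAt_id x).const_sub 1).mul (hasDerivAt_genFun hp hrec hx)).congr_deriv ?_
  simp only [id]
  field_simp
  ring

end GeneratingFunction

lemma riccati_first_integral {w : ℝ → ℝ} {α β : ℝ}
    (hw : ∀ x ∈ Ico (0 : ℝ) 1, HasDerivAt w ((w x - α) * (w x - β) / (1 - x)) x)
    (hβ : ∀ x ∈ Ico (0 : ℝ) 1, w x ≠ β) {x : ℝ} (hx : x ∈ Ico (0 : ℝ) 1) :
    (w x - α) * (w 0 - β) = (w 0 - α) * (w x - β) * (1 - x) ^ (β - α) := by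
  set R : ℝ → ℝ := fun y => (w y - α) / ((w y - β) * (1 - y) ^ (β - α))
  have hR : ∀ y ∈ Ico (0 : ℝ) 1, HasDerivAt R 0 y := by
    intro y hy
    have hy1 : 0 < 1 - y := by linarith [hy.2]
    have hwβ : w y - β ≠ 0 := sub_ne_zero.2 (hβ y hy)
    have hT := ((hasDerivAt_id y).const_sub 1).rpow_const (p := β - α) (Or.inl hy1.ne')
    refine (((hw y hy).sub_const α).div (((hw y hy).sub_const β).mul hT)
      (mul_ne_zero hwβ (Real.rpow_pos_of_pos hy1 _).ne')).congr_deriv ?_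
    simp only [Pi.mul_apply, id]
    rw [Real.rpow_sub_one hy1.ne']
    field_simp
    ring
  have hconst := constant_of_has_deriv_right_zero (f := R) (a := 0) (b := x)
    (fun y hy => (hR y ⟨hy.1, hy.2.trans_lt hx.2⟩).continuousAt.continuousWithinAt)
    (fun y hy => (hR y ⟨hy.1, hy.2.trans hx.2⟩).hasDerivWithinAt) x ⟨hx.1, le_rfl⟩
  have hx1 : 0 < 1 - x := by linarith [hx.2]
  simp only [R, sub_zero, Real.one_rpow, mul_one] at hconst
  rw [div_eq_div_iff (mul_ne_zero (sub_ne_zero.2 (hβ x hx)) (by positivity))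
    (sub_ne_zero.2 (hβ 0 ⟨le_rfl, one_pos⟩))] at hconst
  linear_combination hconst

lemma integral_pow_mul_one_sub (k : ℕ) :
    ∫ x in (0 : ℝ)..1, x ^ k * (1 - x) = 1 / (((k : ℝ) + 1) * ((k : ℝ) + 2)) := by
  have hk : ((k : ℝ) + 1) * ((k : ℝ) + 2) ≠ 0 := by positivity
  simp only [mul_sub, mul_one, ← pow_succ]
  rw [intervalIntegral.integral_sub (intervalIntegral.intervalIntegrable_pow k)
    (intervalIntegral.intervalIntegrable_pow (k + 1)), integral_pow, integral_pow]
  field_simp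
  push_cast
  ring

lemma summable_one_div_succ_mul_succ_add_one :
    Summable fun k : ℕ => 1 / (((k : ℝ) + 1) * ((k : ℝ) + 2)) := by
  have hsq : Summable fun k : ℕ => 1 / ((k : ℝ) + 1) ^ 2 := by
    simpa using (summable_nat_add_iff 1).2 (Real.summable_one_div_nat_pow.2 one_lt_two)
  refine hsq.of_nonneg_of_le (fun k => by positivity) fun k => ?_
  gcongr
  rw [sq]
  gcongr
  linarith

lemma hasSum_div_eq_integral_one_sub_mul_genFun {a : ℕ → ℝ} {C : ℝ}
    (ha : ∀ n, |a n| ≤ C) :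
    HasSum (fun k : ℕ => a k / (((k : ℝ) + 1) * ((k : ℝ) + 2)))
      (∫ x in (0 : ℝ)..1, (1 - x) * genFun a x) := by
  set F : ℕ → ℝ → ℝ := fun k x => a k * (x ^ k * (1 - x))
  have hF : ∀ (c : ℝ) (k : ℕ), ∫ x in Ioc (0 : ℝ) 1, c * (x ^ k * (1 - x))
      = c / (((k : ℝ) + 1) * ((k : ℝ) + 2)) := fun c k => by
    rw [← intervalIntegral.integral_of_le zero_le_one, intervalIntegral.integral_const_mul,
      integral_pow_mul_one_sub, mul_one_div]
  have hFnorm : ∀ k, ∫ x in Ioc (0 : ℝ) 1, ‖F k x‖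
      = |a k| / (((k : ℝ) + 1) * ((k : ℝ) + 2)) := fun k => by
    rw [← hF]
    refine setIntegral_congr_fun measurableSet_Ioc fun x hx => ?_
    have hnonneg : 0 ≤ x ^ k * (1 - x) := mul_nonneg (pow_nonneg hx.1.le k) (by linarith [hx.2])
    rw [Real.norm_eq_abs, abs_mul, abs_of_nonneg hnonneg]
  have habs : Summable fun k : ℕ => |a k| / (((k : ℝ) + 1) * ((k : ℝ) + 2)) := by
    refine (summable_one_div_succ_mul_succ_add_one.mul_left C).of_nonneg_of_le
      (fun k => by positivity) fun k => ?_
    rw [mul_one_div]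
    gcongr
    exact ha k
  have hsum : Summable fun k : ℕ => a k / (((k : ℝ) + 1) * ((k : ℝ) + 2)) :=
    habs.of_norm_bounded fun k => by
      have hk : (0 : ℝ) < ((k : ℝ) + 1) * ((k : ℝ) + 2) := by positivity
      rw [Real.norm_eq_abs, abs_div, abs_of_pos hk]
  rw [hsum.hasSum_iff, intervalIntegral.integral_of_le zero_le_one]
  calc ∑' k, a k / (((k : ℝ) + 1) * ((k : ℝ) + 2))
      = ∑' k, ∫ x in Ioc (0 : ℝ) 1, F k x := tsum_congr fun k => (hF (a k) k).symm
    _ = ∫ x in Ioc (0 : ℝ) 1, ∑' k, F k x :=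
      (integral_tsum_of_summable_integral_norm
        (fun k => (by fun_prop : Continuous (F k)).integrableOn_Ioc)
        (habs.congr fun k => (hFnorm k).symm))
    _ = ∫ x in Ioc (0 : ℝ) 1, (1 - x) * genFun a x := by
      congr 1 with x
      simp only [F, genFun, ← tsum_mul_left]
      exact tsum_congr fun k => by ring

section ClosedForm

variable {p : ℕ → ℝ} {x : ℝ}

lemma one_sub_mul_genFun_le_one (hp : ∀ n, p n ∈ Icc (0 : ℝ) 1) (hx : x ∈ Ico (0 : ℝ) 1) :
    (1 - x) * genFun p x ≤ 1 := by
  have hx1 : 0 < 1 - x := by linarith [hx.2]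
  have hle : genFun p x ≤ (1 - x)⁻¹ := by
    rw [← tsum_geometric_of_lt_one hx.1 hx.2]
    refine Summable.tsum_le_tsum (fun n => mul_le_of_le_one_left (pow_nonneg hx.1 n) (hp n).2)
      (summable_mul_pow (C := 1) (fun n => abs_le.2 ⟨by linarith [(hp n).1], (hp n).2⟩)
        (by rw [abs_of_nonneg hx.1]; exact hx.2))
      (summable_geometric_of_lt_one hx.1 hx.2)
  calc (1 - x) * genFun p x ≤ (1 - x) * (1 - x)⁻¹ := by gcongr
    _ = 1 := mul_inv_cancel₀ hx1.ne'

lemma one_sub_mul_genFun_eq (h0 : p 0 = 0) (hp : ∀ n, p n ∈ Icc (0 : ℝ) 1)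
    (hrec : ∀ n : ℕ,
      ((n : ℝ) + 1) * p (n + 1) = ∑ j ∈ range (n + 1), (1 - p j) * (1 - p (n - j)))
    (hx : x ∈ Ico (0 : ℝ) 1) :
    (1 - x) * genFun p x
      = (√5 - 3) * (((1 - x) ^ √5 - 1) / ((3 * √5 - 7) * (1 - x) ^ √5 + 2)) := by
  set s := √5
  have hs : s ^ 2 = 5 := Real.sq_sqrt (by norm_num)
  have hs2 : 2 < s := by nlinarith [Real.sqrt_nonneg 5]
  have hs73 : 3 * s < 7 := by nlinarith [Real.sqrt_nonneg 5]
  set w := fun y => (1 - y) * genFun p y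
  have hw : ∀ y ∈ Ico (0 : ℝ) 1,
      HasDerivAt w ((w y - (3 - s) / 2) * (w y - (3 + s) / 2) / (1 - y)) y := fun y hy => by
    refine (hasDerivAt_one_sub_mul_genFun hp hrec
      (abs_lt.2 ⟨by linarith [hy.1], hy.2⟩)).congr_deriv ?_
    congr 1
    linear_combination (1 / 4 : ℝ) * hs
  have hβ : ∀ y ∈ Ico (0 : ℝ) 1, w y ≠ (3 + s) / 2 := fun y hy =>
    (lt_of_le_of_lt (one_sub_mul_genFun_le_one hp hy) (by linarith)).ne
  have h := riccati_first_integral hw hβ hx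
  have hexp : (3 + s) / 2 - (3 - s) / 2 = s := by ring
  simp only [w, sub_zero, one_mul, genFun_zero, h0, hexp] at h
  set T := (1 - x) ^ s
  have hT : T ≤ 1 := Real.rpow_le_one (by linarith [hx.2]) (by linarith [hx.1]) (by positivity)
  have hT0 : 0 ≤ T := Real.rpow_nonneg (by linarith [hx.2]) s
  have hden : 0 < (3 * s - 7) * T + 2 := by nlinarith
  rw [mul_div_assoc', eq_div_iff hden.ne']
  -- uses `(s - 3) * ((3 - s) / 2 * T - (3 + s) / 2) = (3 * s - 7) * T + 2` when `s ^ 2 = 5`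
  linear_combination (s - 3) * h + ((1 - x) * genFun p x * (T + 1) / 2 - (s - 3) * (T - 1) / 4) * hs

end ClosedForm

end BSTMean

open BSTMean in
/-- For the sequence `p` defined by `p₀ = 0` and
`pₙ = (1/n) Σ_{j=0}^{n-1} (1 - pⱼ)(1 - p_{n-1-j})` for `n ≥ 1`, we have
`Σ_{k≥0} 2pₖ/((k+1)(k+2)) = 2(√5 - 3) ∫₀¹ (x^√5 - 1)/((3√5 - 7)x^√5 + 2) dx`. -/
theorem bst_mean_constant_integral (p : ℕ → ℝ) (h0 : p 0 = 0)
    (hrec : ∀ n : ℕ, 1 ≤ n →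
      p n = (1 / (n : ℝ)) * ∑ j ∈ Finset.range n, (1 - p j) * (1 - p (n - 1 - j))) :
    HasSum (fun k : ℕ => 2 * p k / (((k : ℝ) + 1) * ((k : ℝ) + 2)))
      (2 * (Real.sqrt 5 - 3) *
        ∫ x in (0:ℝ)..1,
          (x ^ Real.sqrt 5 - 1) / ((3 * Real.sqrt 5 - 7) * x ^ Real.sqrt 5 + 2)) := by
  have hp := mem_Icc_of_rec h0 hrec
  have hbound : ∀ n, |2 * p n| ≤ 2 := fun n => by
    rw [abs_mul, abs_two, abs_of_nonneg (hp n).1]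
    linarith [(hp n).2]
  convert hasSum_div_eq_integral_one_sub_mul_genFun hbound using 1
  have hsubst := intervalIntegral.integral_comp_sub_left (a := 0) (b := 1)
    (fun y => 2 * (√5 - 3) * ((y ^ √5 - 1) / ((3 * √5 - 7) * y ^ √5 + 2))) 1
  rw [sub_self, sub_zero] at hsubst
  rw [← intervalIntegral.integral_const_mul, ← hsubst]
  refine intervalIntegral.integral_congr_ae ?_
  filter_upwards [Measure.ae_ne volume 1] with x hx1 hx
  rw [uIoc_of_le zero_le_one] at hx
  rw [genFun_const_mul, mul_left_comm (1 - x), mul_assoc,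
    one_sub_mul_genFun_eq h0 hp (succ_mul_eq_sum hrec) ⟨hx.1.le, lt_of_le_of_ne hx.2 hx1⟩]
end

section
/- Let T be a finite rooted tree whose root r has children v_1, …, v_m, and let T_1, …, T_m be the fringe trees rooted at v_1, …, v_m. Then the domination number D(T) of T satisfies D(T_1) + ⋯ + D(T_m) − m + 1 ≤ D(T) ≤ D(T_1) + ⋯ + D(T_m) + 1. -/
open MeasureTheory ProbabilityTheory Filter Asymptotics

/-- The domination number of the subgraph of `G` induced on the vertex set `S`. -/
noncomputable def domNumOn {V : Type*} (G : SimpleGraph V) (S : Set V) : ℕ :=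
  sInf {k : ℕ | ∃ W : Finset V, ↑W ⊆ S ∧ W.card = k ∧
    ∀ v ∈ S, v ∈ W ∨ ∃ u ∈ W, G.Adj u v}

section Aux

variable {V : Type*}

lemma mem_descSet_self (p : V → V) (v : V) : v ∈ descSet p v := ⟨0, rfl⟩

lemma parent_mem_descSet {p : V → V} {u v : V} (hu : u ∈ descSet p v) (hne : u ≠ v) :
    p u ∈ descSet p v := by
  obtain ⟨k, hk⟩ := hu
  cases k with
  | zero => exact absurd hk hne
  | succ n => exact ⟨n, by rwa [Function.iterate_succ_apply] at hk⟩

lemma child_mem_descSet {p : V → V} {u v w : V} (hw : p w = u) (hu : u ∈ descSet p v) :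
    w ∈ descSet p v := by
  obtain ⟨k, hk⟩ := hu
  exact ⟨k + 1, by rw [Function.iterate_succ_apply, hw, hk]⟩

lemma iterate_child {p : V → V} {r v : V} (hr : p r = r) (hv : p v = r) (i : ℕ) :
    p^[i] v = v ∨ p^[i] v = r := by
  cases i with
  | zero => exact Or.inl rfl
  | succ n =>
      exact Or.inr (by rw [Function.iterate_succ_apply, hv, Function.iterate_fixed hr])

lemma root_notMem_descSet {p : V → V} {r v : V} (hr : p r = r) (hv : v ≠ r) :
    r ∉ descSet p v := by
  rintro ⟨k, hk⟩
  rw [Function.iterate_fixed hr] at hk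
  exact hv hk.symm

lemma descSet_key {p : V → V} {r v w u : V} (hr : p r = r) (hv : p v = r)
    (hwr : w ≠ r) (hvw : v ≠ w) {k j : ℕ} (hk : p^[k] u = v) (hj : p^[j] u = w)
    (hle : k ≤ j) : False := by
  have hcomp : p^[j] u = p^[j - k] v := by
    conv_lhs => rw [← Nat.sub_add_cancel hle]
    rw [Function.iterate_add_apply, hk]
  have hw' : w = p^[j - k] v := by rw [← hj, hcomp]
  rcases iterate_child hr hv (j - k) with h1 | h1
  · exact hvw (by rw [hw', h1])
  · exact hwr (by rw [hw', h1])

lemma descSet_disjoint {p : V → V} {r v w : V} (hr : p r = r) (hv : p v = r)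
    (hw : p w = r) (hvr : v ≠ r) (hwr : w ≠ r) (hvw : v ≠ w) :
    Disjoint (descSet p v) (descSet p w) := by
  rw [Set.disjoint_left]
  rintro u ⟨k, hk⟩ ⟨j, hj⟩
  rcases le_total k j with hle | hle
  · exact descSet_key hr hv hwr hvw hk hj hle
  · exact descSet_key hr hw hvr (Ne.symm hvw) hj hk hle

lemma exists_child {p : V → V} {r : V} (h : IsRootedTree p r) {u : V} (hu : u ≠ r) :
    ∃ v, p v = r ∧ v ≠ r ∧ u ∈ descSet p v := by
  classical
  have hne : ∃ k, p^[k] u = r := h.2 u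
  have hk : p^[Nat.find hne] u = r := Nat.find_spec hne
  have hkpos : Nat.find hne ≠ 0 := by
    intro h0
    apply hu
    simpa [h0] using hk
  obtain ⟨n, hn⟩ := Nat.exists_eq_succ_of_ne_zero hkpos
  rw [hn] at hk
  refine ⟨p^[n] u, ?_, ?_, ⟨n, rfl⟩⟩
  · have := hk
    rwa [Function.iterate_succ_apply'] at this
  · exact Nat.find_min hne (by omega)

lemma domNumOn_spec [Fintype V] (G : SimpleGraph V) (S : Set V) :
    ∃ W : Finset V, ↑W ⊆ S ∧ W.card = domNumOn G S ∧
      ∀ v ∈ S, v ∈ W ∨ ∃ u ∈ W, G.Adj u v := by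
  classical
  have hne : {k : ℕ | ∃ W : Finset V, ↑W ⊆ S ∧ W.card = k ∧
      ∀ v ∈ S, v ∈ W ∨ ∃ u ∈ W, G.Adj u v}.Nonempty :=
    ⟨S.toFinite.toFinset.card, S.toFinite.toFinset, le_of_eq (S.toFinite.coe_toFinset), rfl,
      fun v hv => Or.inl (by simpa using hv)⟩
  obtain ⟨W, h1, h2, h3⟩ := Nat.sInf_mem hne
  exact ⟨W, h1, h2, h3⟩

lemma domNumOn_le [Fintype V] (G : SimpleGraph V) (S : Set V) (W : Finset V)
    (hW : ↑W ⊆ S) (hdom : ∀ v ∈ S, v ∈ W ∨ ∃ u ∈ W, G.Adj u v) :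
    domNumOn G S ≤ W.card :=
  Nat.sInf_le ⟨W, hW, rfl, hdom⟩

end Aux

/-- For a finite rooted tree with root `r` whose children are `v₁, …, vₘ` with fringe
trees `T₁, …, Tₘ`, the domination number satisfies
`D(T₁) + ⋯ + D(Tₘ) - m + 1 ≤ D(T) ≤ D(T₁) + ⋯ + D(Tₘ) + 1`. -/
theorem domination_number_fringe_bounds {V : Type*} [Fintype V] [DecidableEq V]
    (p : V → V) (r : V) (h : IsRootedTree p r) :
    ((∑ v ∈ Finset.univ.filter (fun v : V => p v = r ∧ v ≠ r),
        (domNumOn (parentGraph p) (descSet p v) : ℤ)) -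
        (Finset.univ.filter (fun v : V => p v = r ∧ v ≠ r)).card + 1 ≤
      (domNumOn (parentGraph p) Set.univ : ℤ)) ∧
      domNumOn (parentGraph p) Set.univ ≤
        (∑ v ∈ Finset.univ.filter (fun v : V => p v = r ∧ v ≠ r),
          domNumOn (parentGraph p) (descSet p v)) + 1 := by
  classical
  obtain ⟨hroot, hreach⟩ := h
  set G := parentGraph p with hG
  set C := Finset.univ.filter (fun v : V => p v = r ∧ v ≠ r) with hC
  have hCmem : ∀ v, v ∈ C ↔ p v = r ∧ v ≠ r := by
    intro v; simp [hC]
  have hadj : ∀ u v, G.Adj u v ↔ u ≠ v ∧ (p u = v ∨ p v = u) := by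
    intro u v
    exact SimpleGraph.fromRel_adj _ u v
  -- upper bound
  have upper : domNumOn G Set.univ ≤ (∑ v ∈ C, domNumOn G (descSet p v)) + 1 := by
    choose W hW1 hW2 hW3 using fun v : V => domNumOn_spec G (descSet p v)
    have hdom : ∀ u ∈ (Set.univ : Set V),
        u ∈ insert r (C.biUnion W) ∨ ∃ w ∈ insert r (C.biUnion W), G.Adj w u := by
      intro u _
      by_cases hur : u = r
      · exact Or.inl (by simp [hur])
      · obtain ⟨v, hv1, hv2, hv3⟩ := exists_child ⟨hroot, hreach⟩ hur
        have hvC : v ∈ C := (hCmem v).2 ⟨hv1, hv2⟩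
        rcases hW3 v u hv3 with h' | ⟨w, hw1, hw2⟩
        · exact Or.inl (Finset.mem_insert_of_mem (Finset.mem_biUnion.2 ⟨v, hvC, h'⟩))
        · exact Or.inr ⟨w,
            Finset.mem_insert_of_mem (Finset.mem_biUnion.2 ⟨v, hvC, hw1⟩), hw2⟩
    calc domNumOn G Set.univ ≤ (insert r (C.biUnion W)).card :=
          domNumOn_le G _ _ (Set.subset_univ _) hdom
      _ ≤ (C.biUnion W).card + 1 := Finset.card_insert_le _ _
      _ ≤ (∑ v ∈ C, (W v).card) + 1 := by
          gcongr
          exact Finset.card_biUnion_le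
      _ = (∑ v ∈ C, domNumOn G (descSet p v)) + 1 := by
          rw [Finset.sum_congr rfl fun v _ => hW2 v]
  -- lower bound
  obtain ⟨W0, hW01, hW02, hW03⟩ := domNumOn_spec G Set.univ
  set D := fun v => W0.filter (fun u => u ∈ descSet p v) with hD
  have hDsub : ∀ v, (D v : Set V) ⊆ descSet p v := by
    intro v u hu
    simp only [hD, Finset.coe_filter, Set.mem_setOf_eq] at hu
    exact hu.2
  have hle : ∀ v ∈ C, domNumOn G (descSet p v) ≤ (insert v (D v)).card := by
    intro v hv
    obtain ⟨hv1, hv2⟩ := (hCmem v).1 hv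
    apply domNumOn_le
    · rw [Finset.coe_insert]
      exact Set.insert_subset (mem_descSet_self p v) (hDsub v)
    · intro u hu
      by_cases huv : u = v
      · exact Or.inl (by simp [huv])
      · rcases hW03 u trivial with h' | ⟨w, hw1, hw2⟩
        · refine Or.inl (Finset.mem_insert_of_mem ?_)
          simp only [hD, Finset.mem_filter]
          exact ⟨h', hu⟩
        · refine Or.inr ⟨w, Finset.mem_insert_of_mem ?_, hw2⟩
          rcases (hadj w u).1 hw2 with ⟨hne, hpar | hpar⟩
          · simp only [hD, Finset.mem_filter]
            exact ⟨hw1, child_mem_descSet hpar hu⟩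
          · simp only [hD, Finset.mem_filter]
            exact ⟨hw1, hpar ▸ parent_mem_descSet hu huv⟩
  have hDdisj : ∀ v ∈ C, ∀ w ∈ C, v ≠ w → Disjoint (D v) (D w) := by
    intro v hv w hw hvw
    obtain ⟨hv1, hv2⟩ := (hCmem v).1 hv
    obtain ⟨hw1, hw2⟩ := (hCmem w).1 hw
    rw [Finset.disjoint_left]
    intro u hu1 hu2
    have h1 : u ∈ descSet p v := hDsub v hu1
    have h2 : u ∈ descSet p w := hDsub w hu2
    exact Set.disjoint_left.1 (descSet_disjoint hroot hv1 hw1 hv2 hw2 hvw) h1 h2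
  have hBsub : C.biUnion D ⊆ W0 := by
    intro u hu
    obtain ⟨v, _, hv2⟩ := Finset.mem_biUnion.1 hu
    exact Finset.mem_of_mem_filter u hv2
  have hBcard : (C.biUnion D).card = ∑ v ∈ C, (D v).card :=
    Finset.card_biUnion hDdisj
  have lower : (∑ v ∈ C, (domNumOn G (descSet p v) : ℤ)) - C.card + 1 ≤
      (domNumOn G Set.univ : ℤ) := by
    rcases hW03 r trivial with hrW | ⟨w, hw1, hw2⟩
    · -- r ∈ W0
      have hrB : r ∉ C.biUnion D := by
        intro hr'
        obtain ⟨v, hv1, hv2⟩ := Finset.mem_biUnion.1 hr'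
        obtain ⟨_, hv4⟩ := (hCmem v).1 hv1
        exact root_notMem_descSet hroot hv4 (hDsub v hv2)
      have h2 : (∑ v ∈ C, (D v).card) + 1 ≤ W0.card := by
        rw [← hBcard, ← Finset.card_insert_of_notMem hrB]
        exact Finset.card_le_card (Finset.insert_subset hrW hBsub)
      have h1 : ∑ v ∈ C, domNumOn G (descSet p v) ≤
          (∑ v ∈ C, (D v).card) + C.card := by
        calc ∑ v ∈ C, domNumOn G (descSet p v) ≤ ∑ v ∈ C, ((D v).card + 1) := by
              apply Finset.sum_le_sum
              intro v hv
              exact le_trans (hle v hv) (Finset.card_insert_le _ _)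
          _ = (∑ v ∈ C, (D v).card) + C.card := by
              rw [Finset.sum_add_distrib, Finset.sum_const, smul_eq_mul, mul_one]
        -- done
      rw [← hW02]
      have h1' := (Nat.cast_le (α := ℤ)).2 h1
      have h2' := (Nat.cast_le (α := ℤ)).2 h2
      push_cast at h1' h2' ⊢
      linarith
    · -- a child w of r is in W0
      rcases (hadj w r).1 hw2 with ⟨hne, hpar | hpar⟩
      swap
      · exact absurd (hroot.symm.trans hpar).symm hne
      have hwC : w ∈ C := (hCmem w).2 ⟨hpar, hne⟩
      have hwD : w ∈ D w := by
        simp only [hD, Finset.mem_filter]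
        exact ⟨hw1, mem_descSet_self p w⟩
      have hlew : domNumOn G (descSet p w) ≤ (D w).card := by
        have := hle w hwC
        rwa [Finset.insert_eq_self.2 hwD] at this
      have h1 : ∑ v ∈ C, domNumOn G (descSet p v) + 1 ≤
          (∑ v ∈ C, (D v).card) + C.card := by
        rw [← Finset.add_sum_erase C _ hwC, ← Finset.add_sum_erase C (fun v => (D v).card) hwC]
        have hsum : ∑ v ∈ C.erase w, domNumOn G (descSet p v) ≤
            ∑ v ∈ C.erase w, ((D v).card + 1) := by
          apply Finset.sum_le_sum
          intro v hv
          exact le_trans (hle v (Finset.mem_of_mem_erase hv))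
            (Finset.card_insert_le _ _)
        have hcarderase : (C.erase w).card + 1 = C.card :=
          Finset.card_erase_add_one hwC
        have hsum2 : ∑ v ∈ C.erase w, ((D v).card + 1) =
            (∑ v ∈ C.erase w, (D v).card) + (C.erase w).card := by
          rw [Finset.sum_add_distrib, Finset.sum_const, smul_eq_mul, mul_one]
        omega
      have h2 : (∑ v ∈ C, (D v).card) ≤ W0.card := by
        rw [← hBcard]
        exact Finset.card_le_card hBsub
      rw [← hW02]
      have h1' := (Nat.cast_le (α := ℤ)).2 h1
      have h2' := (Nat.cast_le (α := ℤ)).2 h2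
      push_cast at h1' h2' ⊢
      linarith
  exact ⟨lower, upper⟩
end

section
/- Let n ≥ 2 and let Λ_n be a random recursive tree with n vertices. Removing the edge between the vertex labelled 1 and the vertex labelled 2 splits Λ_n into two trees; let S_n be the number of vertices of the tree containing vertex 2 (i.e., vertex 2 together with all its descendants). Then S_n is uniformly distributed on {1, …, n−1}, i.e., P(S_n = k) = 1/(n−1) for every k ∈ {1, …, n−1}. -/
open MeasureTheory ProbabilityTheory Filter Asymptotics

/-- `f` is a valid parent function of a recursive tree on vertices `0, 1, …, n-1`
(vertex `i` has label `i+1`): the root `0` is a fixed point and the parent of any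
other vertex has a smaller index. -/
def IsRecParent {n : ℕ} (f : Fin n → Fin n) : Prop :=
  ∀ i : Fin n, ((i : ℕ) = 0 → f i = i) ∧ ((i : ℕ) ≠ 0 → (f i : ℕ) < (i : ℕ))

instance {n : ℕ} : DecidablePred (@IsRecParent n) := fun f =>
  inferInstanceAs (Decidable
    (∀ i : Fin n, ((i : ℕ) = 0 → f i = i) ∧ ((i : ℕ) ≠ 0 → (f i : ℕ) < (i : ℕ))))

/-- Recursive trees on `n` vertices, encoded by their parent functions. The uniform
distribution on this type is exactly the distribution of the random recursive tree. -/
abbrev RecTree (n : ℕ) : Type := {f : Fin n → Fin n // IsRecParent f}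

instance {n : ℕ} : Nonempty (RecTree n) :=
  ⟨⟨fun i => ⟨0, i.pos⟩, fun i =>
    ⟨fun h => by apply Fin.ext; simp [h], fun h => Nat.pos_of_ne_zero h⟩⟩⟩

instance (n : ℕ) : MeasurableSpace (RecTree n) := ⊤

/-- The distribution of the random recursive tree on `n` vertices. -/
noncomputable def recMeasure (n : ℕ) : Measure (RecTree n) :=
  (PMF.uniformOfFintype (RecTree n)).toMeasure

namespace Scratch

variable {n : ℕ}

lemma parent_le {f : Fin n → Fin n} (hf : IsRecParent f) (i : Fin n) : (f i : ℕ) ≤ i := by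
  rcases eq_or_ne (i : ℕ) 0 with h | h
  · rw [(hf i).1 h]
  · exact le_of_lt ((hf i).2 h)

lemma mem_desc_self {V : Type*} (p : V → V) (v : V) : v ∈ descSet p v := ⟨0, rfl⟩

lemma fixed_notMem {V : Type*} {p : V → V} {r v : V} (hr : p r = r) (hrv : r ≠ v) :
    r ∉ descSet p v := by
  rintro ⟨k, hk⟩
  have : p^[k] r = r := Function.iterate_fixed hr k
  exact hrv (this ▸ hk)

lemma desc_step {V : Type*} {p : V → V} {v u : V} (huv : u ≠ v) :
    u ∈ descSet p v ↔ p u ∈ descSet p v := by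
  constructor
  · rintro ⟨k, hk⟩
    cases k with
    | zero => exact absurd hk huv
    | succ m => exact ⟨m, by rw [← hk, Function.iterate_succ_apply]⟩
  · rintro ⟨k, hk⟩
    exact ⟨k + 1, by rw [Function.iterate_succ_apply, hk]⟩

end Scratch
namespace Scratch

/-- restriction of a recursive tree on n+3 vertices to the first n+2 -/
def restrict (f : RecTree (n + 3)) : RecTree (n + 2) :=
  ⟨fun i => ⟨(f.1 i.castSucc : ℕ), by
      have := parent_le f.2 i.castSucc
      have : (f.1 i.castSucc : ℕ) ≤ (i : ℕ) := this
      omega⟩, by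
    intro i
    constructor
    · intro h
      have h0 : (i.castSucc : ℕ) = 0 := h
      have := (f.2 i.castSucc).1 h0
      apply Fin.ext
      simp only [Fin.val_mk]
      rw [this]
      exact h.symm ▸ (by simp [Fin.coe_castSucc, h])
    · intro h
      exact (f.2 i.castSucc).2 h⟩

def lastP (f : RecTree (n + 3)) : Fin (n + 2) :=
  ⟨(f.1 ⟨n + 2, by omega⟩ : ℕ), (f.2 ⟨n + 2, by omega⟩).2 (by simp)⟩

def extend (g : RecTree (n + 2)) (c : Fin (n + 2)) : RecTree (n + 3) :=
  ⟨fun i => if h : (i : ℕ) < n + 2 then (g.1 ⟨i, h⟩).castSucc else c.castSucc, by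
    intro i
    constructor
    · intro h
      have h2 : (i : ℕ) < n + 2 := by omega
      simp only [h2, dif_pos]
      apply Fin.ext
      have := (g.2 ⟨i, h2⟩).1 (by simpa using h)
      have h3 : ((⟨(i:ℕ), h2⟩ : Fin (n+2)) : ℕ) = 0 := by simpa using h
      calc ((g.1 ⟨(i:ℕ), h2⟩).castSucc : ℕ) = ((g.1 ⟨(i:ℕ), h2⟩ : Fin (n+2)) : ℕ) := rfl
        _ = (i : ℕ) := by rw [this]
    · intro h
      by_cases h2 : (i : ℕ) < n + 2
      · simp only [h2, dif_pos]
        exact (g.2 ⟨i, h2⟩).2 (by simpa using h)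
      · simp only [h2, dif_neg]
        have : (i : ℕ) = n + 2 := by omega
        simp only [Fin.coe_castSucc, this]
        exact c.2⟩

def recEquiv : RecTree (n + 3) ≃ RecTree (n + 2) × Fin (n + 2) where
  toFun f := (restrict f, lastP f)
  invFun p := extend p.1 p.2
  left_inv f := by
    apply Subtype.ext
    funext i
    simp only [extend, restrict, lastP]
    by_cases h : (i : ℕ) < n + 2
    · simp only [h, dif_pos]
      apply Fin.ext
      show ((restrict f).1 ⟨(i:ℕ), h⟩ : ℕ) = ((f.1 i : Fin (n+3)) : ℕ)
      show ((f.1 ((⟨(i:ℕ), h⟩ : Fin (n+2)).castSucc) : Fin (n+3)) : ℕ) = _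
      have : (⟨(i:ℕ), h⟩ : Fin (n+2)).castSucc = i := Fin.ext (by simp)
      rw [this]
    · simp only [h, dif_neg]
      apply Fin.ext
      show ((lastP f : Fin (n+2)) : ℕ) = _
      have hi : i = (⟨n+2, by omega⟩ : Fin (n+3)) := Fin.ext (by have := i.2; simp; omega)
      show ((f.1 ⟨n+2, by omega⟩ : Fin (n+3)) : ℕ) = ((f.1 i : Fin (n+3)) : ℕ)
      rw [hi]
  right_inv p := by
    rcases p with ⟨g, c⟩
    refine Prod.ext ?_ ?_
    · apply Subtype.ext
      funext i
      apply Fin.ext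
      show (((extend g c).1 i.castSucc : Fin (n+3)) : ℕ) = _
      have h : ((i.castSucc : Fin (n + 3)) : ℕ) < n + 2 := by
        have := i.2; simpa using this
      simp only [extend, h, dif_pos]
      show ((g.1 ⟨((i.castSucc : Fin (n+3)) : ℕ), h⟩ : Fin (n+2)) : ℕ) = _
      have : (⟨((i.castSucc : Fin (n+3)) : ℕ), h⟩ : Fin (n+2)) = i := Fin.ext (by simp)
      rw [this]
    · apply Fin.ext
      show (((extend g c).1 ⟨n+2, by omega⟩ : Fin (n+3)) : ℕ) = (c : ℕ)
      have h : ¬ (((⟨n + 2, by omega⟩ : Fin (n+3)) : Fin (n + 3)) : ℕ) < n + 2 := by simp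
      simp only [extend, h, dif_neg]
      rfl

end Scratch
namespace Scratch

lemma iterate_castSucc (f : RecTree (n + 3)) (u : Fin (n + 2)) (k : ℕ) :
    f.1^[k] u.castSucc = ((restrict f).1^[k] u).castSucc := by
  induction k generalizing u with
  | zero => rfl
  | succ m ih =>
    rw [Function.iterate_succ_apply, Function.iterate_succ_apply]
    have : f.1 u.castSucc = ((restrict f).1 u).castSucc := by
      apply Fin.ext
      rfl
    rw [this, ih]

lemma mem_desc_castSucc (f : RecTree (n + 3)) (u : Fin (n + 2)) :
    u.castSucc ∈ descSet f.1 ((1 : Fin (n+2)).castSucc) ↔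
      u ∈ descSet (restrict f).1 1 := by
  constructor
  · rintro ⟨k, hk⟩
    refine ⟨k, ?_⟩
    rw [iterate_castSucc] at hk
    exact Fin.castSucc_injective _ hk
  · rintro ⟨k, hk⟩
    exact ⟨k, by rw [iterate_castSucc, hk]⟩

lemma top_mem_desc (f : RecTree (n + 3)) :
    Fin.last (n + 2) ∈ descSet f.1 ((1 : Fin (n+2)).castSucc) ↔
      lastP f ∈ descSet (restrict f).1 1 := by
  have hne : Fin.last (n + 2) ≠ (1 : Fin (n+2)).castSucc := by
    intro h
    have := congrArg Fin.val h
    simp at this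
  rw [desc_step hne]
  have : f.1 (Fin.last (n + 2)) = (lastP f).castSucc := by
    apply Fin.ext
    show ((f.1 (Fin.last (n+2)) : Fin (n+3)) : ℕ) = ((f.1 ⟨n+2, by omega⟩ : Fin (n+3)) : ℕ)
    congr 2
  rw [this, mem_desc_castSucc]

lemma desc_eq_of_mem (f : RecTree (n + 3)) (h : lastP f ∈ descSet (restrict f).1 1) :
    descSet f.1 ((1 : Fin (n+2)).castSucc) =
      insert (Fin.last (n + 2)) (Fin.castSucc '' descSet (restrict f).1 1) := by
  ext x
  induction x using Fin.lastCases with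
  | last =>
    simp only [Set.mem_insert_iff, true_or, iff_true]
    exact (top_mem_desc f).2 h
  | cast u =>
    rw [mem_desc_castSucc]
    constructor
    · intro hu
      exact Set.mem_insert_of_mem _ ⟨u, hu, rfl⟩
    · intro hu
      rcases hu with h1 | ⟨w, hw, hwu⟩
      · exact absurd (congrArg Fin.val h1) (by simp; omega)
      · rwa [← Fin.castSucc_injective _ hwu]

lemma desc_eq_of_notMem (f : RecTree (n + 3)) (h : lastP f ∉ descSet (restrict f).1 1) :
    descSet f.1 ((1 : Fin (n+2)).castSucc) = Fin.castSucc '' descSet (restrict f).1 1 := by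
  ext x
  induction x using Fin.lastCases with
  | last =>
    refine iff_of_false (fun hx => h ((top_mem_desc f).1 hx)) ?_
    rintro ⟨w, _, hw⟩
    exact absurd (congrArg Fin.val hw) (by simp; omega)
  | cast u =>
    rw [mem_desc_castSucc]
    constructor
    · intro hu
      exact ⟨u, hu, rfl⟩
    · rintro ⟨w, hw, hwu⟩
      rwa [← Fin.castSucc_injective _ hwu]

end Scratch
namespace Scratch

open Classical

lemma last_notMem_image (s : Set (Fin (n+2))) : Fin.last (n+2) ∉ Fin.castSucc '' s := by
  rintro ⟨w, _, hw⟩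
  exact absurd (congrArg Fin.val hw) (by simp; omega)

lemma dsize_extend (f : RecTree (n + 3)) :
    (descSet f.1 ((1 : Fin (n+2)).castSucc)).ncard =
      (descSet (restrict f).1 1).ncard +
        (if lastP f ∈ descSet (restrict f).1 1 then 1 else 0) := by
  by_cases h : lastP f ∈ descSet (restrict f).1 1
  · rw [if_pos h, desc_eq_of_mem f h,
      Set.ncard_insert_of_notMem (last_notMem_image _) (Set.toFinite _),
      Set.ncard_image_of_injective _ (Fin.castSucc_injective _)]
  · rw [if_neg h, desc_eq_of_notMem f h,
      Set.ncard_image_of_injective _ (Fin.castSucc_injective _), add_zero]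

lemma dsize_pos (hn : 2 ≤ n) (f : RecTree n) (v : Fin n) :
    0 < (descSet f.1 v).ncard :=
  (Set.ncard_pos (Set.toFinite _)).2 ⟨v, mem_desc_self _ _⟩

lemma dsize_le (hn : 2 ≤ n) (f : RecTree n) (v : Fin n) (hv : (v : ℕ) ≠ 0) :
    (descSet f.1 v).ncard ≤ n - 1 := by
  have h0 : (⟨0, by omega⟩ : Fin n) ∉ descSet f.1 v := by
    apply fixed_notMem ((f.2 _).1 rfl)
    intro h
    exact hv (congrArg Fin.val h).symm
  have hsub : descSet f.1 v ⊆ {(⟨0, by omega⟩ : Fin n)}ᶜ := fun x hx => by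
    simp only [Set.mem_compl_iff, Set.mem_singleton_iff]
    rintro rfl
    exact h0 hx
  calc (descSet f.1 v).ncard ≤ ({(⟨0, by omega⟩ : Fin n)}ᶜ : Set (Fin n)).ncard :=
        Set.ncard_le_ncard hsub (Set.toFinite _)
    _ = n - 1 := by
        rw [Set.compl_eq_univ_diff, Set.ncard_diff (Set.subset_univ _) (Set.toFinite _),
          Set.ncard_univ, Set.ncard_singleton, Nat.card_eq_fintype_card, Fintype.card_fin]

end Scratch
namespace Scratch
open Classical

lemma inner_card (s : Set (Fin (n + 2))) (d k : ℕ) :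
    Nat.card {c : Fin (n + 2) // d + (if c ∈ s then 1 else 0) = k} =
      if d = k then (n + 2) - s.ncard else if d + 1 = k then s.ncard else 0 := by
  classical
  by_cases h1 : d = k
  · subst h1
    rw [if_pos rfl]
    have he : ∀ c : Fin (n + 2), (d + (if c ∈ s then 1 else 0) = d) ↔ c ∉ s := by
      intro c; by_cases hc : c ∈ s <;> simp [hc]
    rw [Nat.card_congr (Equiv.subtypeEquivRight he), Nat.card_eq_fintype_card,
      Fintype.card_subtype_compl, Fintype.card_fin]
    congr 1
    rw [← Nat.card_eq_fintype_card, Nat.card_coe_set_eq]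
  · rw [if_neg h1]
    by_cases h2 : d + 1 = k
    · rw [if_pos h2]
      have he : ∀ c : Fin (n + 2), (d + (if c ∈ s then 1 else 0) = k) ↔ c ∈ s := by
        intro c; by_cases hc : c ∈ s <;> simp [hc] <;> omega
      rw [Nat.card_congr (Equiv.subtypeEquivRight he), Nat.card_coe_set_eq]
    · rw [if_neg h2]
      have he : IsEmpty {c : Fin (n + 2) // d + (if c ∈ s then 1 else 0) = k} := by
        refine ⟨fun ⟨c, hc⟩ => ?_⟩
        by_cases h : c ∈ s <;> simp [h] at hc <;> omega
      exact Nat.card_of_isEmpty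

lemma rectree2_sub (f g : RecTree 2) : f = g := by
  apply Subtype.ext
  funext i
  have hi := i.2
  interval_cases hi2 : (i : ℕ)
  · rw [(f.2 i).1 hi2, (g.2 i).1 hi2]
  · have h1 := (f.2 i).2 (by omega)
    have h2 := (g.2 i).2 (by omega)
    apply Fin.ext
    omega

lemma desc2 (f : RecTree 2) : (descSet f.1 ⟨1, by omega⟩).ncard = 1 := by
  have : descSet f.1 ⟨1, by omega⟩ = {⟨1, by omega⟩} := by
    ext x
    simp only [Set.mem_singleton_iff]
    constructor
    · intro hx
      have h2 := x.2
      apply Fin.ext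
      rcases (by omega : (x : ℕ) = 0 ∨ (x : ℕ) = 1) with h | h
      · exfalso
        have hx0 : x = ⟨0, by omega⟩ := Fin.ext h
        rw [hx0] at hx
        exact fixed_notMem ((f.2 _).1 rfl) (by intro hc; exact absurd (congrArg Fin.val hc) (by simp)) hx
      · exact h
    · rintro rfl
      exact mem_desc_self _ _
  rw [this, Set.ncard_singleton]

lemma card_rectree2 : Nat.card (RecTree 2) = 1 :=
  Nat.card_eq_one_iff_unique.2 ⟨⟨rectree2_sub⟩, inferInstance⟩

end Scratch
namespace Scratch
open Classical

lemma card_rectree : ∀ m : ℕ, Nat.card (RecTree (m + 2)) = (m + 1).factorial := by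
  intro m
  induction m with
  | zero => simpa using card_rectree2
  | succ n ih =>
    rw [Nat.card_congr recEquiv, Nat.card_prod, ih, Nat.card_eq_fintype_card,
      Fintype.card_fin, Nat.factorial_succ (n + 1), mul_comm]

lemma count_desc : ∀ m : ℕ, ∀ k : ℕ, 1 ≤ k → k ≤ m + 1 →
    Nat.card {f : RecTree (m + 2) // (descSet f.1 (1 : Fin (m + 2))).ncard = k} =
      m.factorial := by
  intro m
  induction m with
  | zero =>
    intro k hk1 hk2
    have hk : k = 1 := by omega
    subst hk
    have hall : ∀ f : RecTree 2, (descSet f.1 (1 : Fin 2)).ncard = 1 := by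
      intro f
      have : (1 : Fin 2) = ⟨1, by omega⟩ := Fin.ext (by simp)
      rw [this]
      exact desc2 f
    rw [Nat.card_congr (Equiv.subtypeUnivEquiv hall), card_rectree2, Nat.factorial_zero]
  | succ n ih =>
    intro k hk1 hk2
    -- transfer to pairs
    have hv : (1 : Fin (n + 3)) = (1 : Fin (n + 2)).castSucc := Fin.ext (by simp)
    have e1 : {f : RecTree (n + 3) // (descSet f.1 (1 : Fin (n + 3))).ncard = k} ≃
        {p : RecTree (n + 2) × Fin (n + 2) //
          (descSet p.1.1 (1 : Fin (n + 2))).ncard +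
            (if p.2 ∈ descSet p.1.1 (1 : Fin (n + 2)) then 1 else 0) = k} :=
      Equiv.subtypeEquiv recEquiv (fun f => by
        rw [hv, dsize_extend f]
        exact Iff.rfl)
    rw [Nat.card_congr (e1.trans (Equiv.subtypeProdEquivSigmaSubtype
      (fun (g : RecTree (n + 2)) (c : Fin (n + 2)) =>
        (descSet g.1 (1 : Fin (n + 2))).ncard +
          (if c ∈ descSet g.1 (1 : Fin (n + 2)) then 1 else 0) = k)))]
    rw [Nat.card_eq_fintype_card, Fintype.card_sigma]
    have hterm : ∀ g : RecTree (n + 2),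
        Fintype.card {c : Fin (n + 2) //
            (descSet g.1 (1 : Fin (n + 2))).ncard +
              (if c ∈ descSet g.1 (1 : Fin (n + 2)) then 1 else 0) = k} =
          (if (descSet g.1 (1 : Fin (n + 2))).ncard = k then (n + 2) - k else 0) +
            (if (descSet g.1 (1 : Fin (n + 2))).ncard = k - 1 then k - 1 else 0) := by
      intro g
      rw [← Nat.card_eq_fintype_card, inner_card]
      set d := (descSet g.1 (1 : Fin (n + 2))).ncard with hd
      by_cases h1 : d = k
      · rw [if_pos h1, if_pos h1, if_neg (show ¬ d = k - 1 by omega), add_zero, h1]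
      · rw [if_neg h1, if_neg h1]
        by_cases h2 : d + 1 = k
        · rw [if_pos h2, if_pos (show d = k - 1 by omega), zero_add]
          omega
        · rw [if_neg h2, if_neg (show ¬ d = k - 1 by omega)]
    simp only [hterm]
    rw [Finset.sum_add_distrib]
    have hsum : ∀ (j c : ℕ),
        (∑ g : RecTree (n + 2),
          (if (descSet g.1 (1 : Fin (n + 2))).ncard = j then c else 0)) =
          Nat.card {g : RecTree (n + 2) // (descSet g.1 (1 : Fin (n + 2))).ncard = j} * c := by
      intro j c
      rw [← Finset.sum_filter, Finset.sum_const, smul_eq_mul, Nat.card_eq_fintype_card,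
        Fintype.card_subtype]
    rw [hsum, hsum]
    have hub : ∀ g : RecTree (n + 2), (descSet g.1 (1 : Fin (n + 2))).ncard ≤ n + 1 := by
      intro g
      have := dsize_le (n := n + 2) (by omega) g (1 : Fin (n + 2)) (by simp)
      omega
    have hlb : ∀ g : RecTree (n + 2), 1 ≤ (descSet g.1 (1 : Fin (n + 2))).ncard := by
      intro g
      exact dsize_pos (by omega) g _
    rcases eq_or_ne k 1 with rfl | hk1'
    · rw [ih 1 le_rfl (by omega), show (1 : ℕ) - 1 = 0 from rfl, mul_zero, add_zero,
        show n + 2 - 1 = n + 1 from rfl, Nat.factorial_succ, mul_comm]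
    rcases eq_or_ne k (n + 2) with rfl | hk2'
    · rw [show n + 2 - (n + 2) = 0 by omega, mul_zero, zero_add,
        show n + 2 - 1 = n + 1 from rfl, ih (n + 1) (by omega) (by omega),
        Nat.factorial_succ, mul_comm]
    · rw [ih k hk1 (by omega), ih (k - 1) (by omega) (by omega), Nat.factorial_succ]
      have h : (n + 2 - k) + (k - 1) = n + 1 := by omega
      calc Nat.factorial n * (n + 2 - k) + Nat.factorial n * (k - 1)
          = Nat.factorial n * ((n + 2 - k) + (k - 1)) := by ring
        _ = (n + 1) * Nat.factorial n := by rw [h]; ring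

end Scratch
open Scratch in
/-- In a random recursive tree with `n ≥ 2` vertices, the size of the subtree obtained
by cutting the edge between the vertices labelled 1 and 2 and keeping the part containing
the vertex labelled 2 (vertex `1` and its descendants) is uniform on `{1, …, n-1}`. -/
theorem rrt_subtree_size_uniform (n : ℕ) (hn : 2 ≤ n) (k : ℕ) (hk1 : 1 ≤ k)
    (hk2 : k ≤ n - 1) :
    (recMeasure n) {f : RecTree n | (descSet f.val ⟨1, by omega⟩).ncard = k} =
      1 / ((n : ENNReal) - 1) := by
  classical
  obtain ⟨m, rfl⟩ : ∃ m, n = m + 2 := ⟨n - 2, by omega⟩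
  have hmeas : MeasurableSet {f : RecTree (m + 2) | (descSet f.val ⟨1, by omega⟩).ncard = k} :=
    trivial
  rw [recMeasure, PMF.toMeasure_uniformOfFintype_apply _ hmeas]
  have h1 : (⟨1, by omega⟩ : Fin (m + 2)) = 1 := Fin.ext (by simp)
  have hcards : Nat.card {f : RecTree (m + 2) | (descSet f.val ⟨1, by omega⟩).ncard = k} =
      m.factorial := by
    rw [Nat.card_congr (Equiv.subtypeEquivRight (fun f => by rw [h1]))]
    exact count_desc m k hk1 (by omega)
  simp only [← Nat.card_eq_fintype_card]
  rw [hcards, card_rectree m]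
  have hfac : ((m + 1).factorial : ENNReal) = ((m + 1 : ℕ) : ENNReal) * (m.factorial : ENNReal) := by
    rw [Nat.factorial_succ]
    push_cast
    ring
  have hne : (m.factorial : ENNReal) ≠ 0 := by
    simp [Nat.factorial_ne_zero]
  have hnt : (m.factorial : ENNReal) ≠ ⊤ := by simp
  rw [hfac]
  rw [show ((m.factorial : ENNReal)) / (((m + 1 : ℕ) : ENNReal) * (m.factorial : ENNReal))
      = ((m.factorial : ENNReal) * 1) / ((m.factorial : ENNReal) * ((m + 1 : ℕ) : ENNReal)) by
    rw [mul_one, mul_comm]]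
  rw [ENNReal.mul_div_mul_left _ _ hne hnt]
  congr 1
  push_cast
  rw [show ((m : ENNReal) + 2) - 1 = (m + 1 + 1) - 1 by ring_nf]
  rw [ENNReal.add_sub_cancel_right (by simp)]
end
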